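/- arXiv:2407.17455 — 12 statements merged into one kernel-verified Lean document; each statement's English description precedes it below -/
import Mathlib

section
/- Let n, p, s be natural numbers with 1 ≤ 2p + s and 2p + s ≤ n. Then the family H^{(p,s)}(n) has the Erdős–Ko–Rado property: for every intersecting family F ⊆ H^{(p,s)}(n), the cardinality of F is at most the number of members of H^{(p,s)}(n) containing the fixed vertex (0, false). -/
/-!
Katona's cycle method. The permutations of `V = Fin n × Bool` commuting with the edge flip
`(i, b) ↦ (i, !b)` form a group acting transitively on `H^{(p,s)}(n)`. Averaging over this group,
it suffices to place the vertices on a cycle `ZMod M` so that all arcs of some length `ℓ` with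
`2ℓ ≤ M` pull back to members of `H^{(p,s)}(n)`: every vertex lies on exactly `ℓ` arcs, while an
intersecting family contains at most `ℓ` of them (the arcs starting at `a` and `a + ℓ` are
disjoint).

For odd `s` put `(i, false)` at `2i` and `(i, true)` at `2i + s` on a cycle of length `2n` and use
arcs of length `2p + s`. For `s = 2r` map `(i, false)` to `i` and `(i, true)` to `i + r` on a cycle
of length `n` (two vertices per point) and use arcs of length `p + r`.
-/

/-- The family `H^{(p,s)}(n)`: subsets of `V(M_n) = Fin n × Bool` of cardinality `2p+s`
spanning exactly `p` edges of the perfect matching `M_n`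
(whose `i`-th edge joins `(i, false)` and `(i, true)`). -/
def matchFamily (n p s : ℕ) : Finset (Finset (Fin n × Bool)) :=
  Finset.univ.filter (fun H : Finset (Fin n × Bool) =>
    H.card = 2 * p + s ∧
    (Finset.univ.filter (fun i : Fin n => (i, false) ∈ H ∧ (i, true) ∈ H)).card = p)
/-- A family of finsets is intersecting if any two of its members intersect. -/
def IsIntersecting {α : Type*} [DecidableEq α] (F : Finset (Finset α)) : Prop :=
  ∀ A ∈ F, ∀ B ∈ F, (A ∩ B).Nonempty

open Finset Pointwise MulAction

section DoubleCounting

variable {G β : Type*} [Group G] [Fintype G] [MulAction G β] [DecidableEq β]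

lemma card_filter_smul_eq_of_mem_orbit {x y : β} (hy : y ∈ orbit G x) :
    #{g : G | g • x = y} = #{g : G | g • x = x} := by
  obtain ⟨g₀, rfl⟩ := hy
  refine card_nbij' (g₀⁻¹ * ·) (g₀ * ·) ?_ ?_ ?_ ?_ <;> intro g hg <;>
    simp_all [mul_smul]

lemma card_filter_smul_mem {x : β} {F : Finset β} (hF : ↑F ⊆ orbit G x) :
    #{g : G | g • x ∈ F} = #F * #{g : G | g • x = x} := by
  rw [card_eq_sum_card_fiberwise (f := (· • x)) (t := F) fun g hg => by simpa using hg,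
    ← smul_eq_mul, ← sum_const]
  refine sum_congr rfl fun y hy => ?_
  rw [filter_filter, ← card_filter_smul_eq_of_mem_orbit (hF hy)]
  congr 1
  ext g
  simp only [mem_filter, mem_univ, true_and, and_iff_right_iff_imp]
  rintro rfl
  exact hy

/-- Summed over `g`, each side counts pairs `(g, i)`; as `g ↦ g • w i` hits every point of the
orbit equally often, that count is `#T * ∑ i, #(stabilizer of w i)` for `T = F, S`. -/
theorem card_le_card_of_forall_card_filter_smul_mem_le {ι : Type*} [Fintype ι] [Nonempty ι]
    {x : β} {w : ι → β} (hw : ∀ i, w i ∈ orbit G x) {F S : Finset β}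
    (hF : ↑F ⊆ orbit G x) (hS : ↑S ⊆ orbit G x)
    (h : ∀ g : G, #{i | g • w i ∈ F} ≤ #{i | g • w i ∈ S}) : #F ≤ #S := by
  have horbit : ∀ i, orbit G (w i) = orbit G x := fun i => orbit_eq_iff.2 (hw i)
  have hcount : ∀ T : Finset β, ↑T ⊆ orbit G x →
      ∑ g : G, #{i | g • w i ∈ T} = #T * ∑ i, #{g : G | g • w i = w i} := by
    intro T hT
    simp only [card_filter]
    rw [sum_comm, mul_sum]
    simp only [← card_filter]
    exact sum_congr rfl fun i _ => card_filter_smul_mem (horbit i ▸ hT)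
  have hpos : 0 < ∑ i, #{g : G | g • w i = w i} :=
    sum_pos (fun i _ => card_pos.2 ⟨1, by simp⟩) univ_nonempty
  refine le_of_mul_le_mul_right ?_ hpos
  rw [← hcount F hF, ← hcount S hS]
  exact sum_le_sum fun g _ => h g

end DoubleCounting

lemma exists_equiv_comp_eq_of_card_fiber_eq {α β γ : Type*} [Fintype α] [Fintype β]
    [DecidableEq γ] {f : α → γ} {g : β → γ} (h : ∀ c, #{a | f a = c} = #{b | g b = c}) :
    ∃ q : α ≃ β, ∀ a, g (q a) = f a := by
  classical
  refine ⟨Equiv.ofFiberEquiv fun c => Fintype.equivOfCardEq ?_, Equiv.ofFiberEquiv_map _⟩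
  simpa only [Fintype.card_subtype] using h c

lemma Equiv.Perm.bool_apply_not (σ : Equiv.Perm Bool) (b : Bool) : σ (!b) = !σ b :=
  Bool.eq_not_of_ne (σ.injective.ne (Bool.not_ne_self b))

section Cycle

variable {M : ℕ} [NeZero M]

lemma card_filter_val (P : ℕ → Prop) [DecidablePred P] :
    #{x : ZMod M | P x.val} = #{t ∈ range M | P t} := by
  refine card_nbij' ZMod.val Nat.cast (fun x hx => ?_) (fun t ht => ?_) (fun x _ => ?_)
    (fun t ht => ?_)
  · simp_all [ZMod.val_lt]
  · simp_all [Nat.mod_eq_of_lt]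
  · exact ZMod.natCast_zmod_val x
  · simp_all [Nat.mod_eq_of_lt]

lemma card_filter_val_sub_lt (c : ZMod M) {ℓ : ℕ} (hℓ : ℓ ≤ M) :
    #{x : ZMod M | (x - c).val < ℓ} = ℓ := by
  rw [card_equiv (Equiv.subRight c) (t := {y : ZMod M | y.val < ℓ}) (by simp),
    card_filter_val (· < ℓ)]
  convert card_range ℓ using 2
  ext t
  simp only [mem_filter, mem_range]
  omega

lemma card_filter_val_sub_lt' (c : ZMod M) {ℓ : ℕ} (hℓ : ℓ ≤ M) :
    #{a : ZMod M | (c - a).val < ℓ} = ℓ := by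
  rw [card_equiv (Equiv.subLeft c) (t := {y : ZMod M | y.val < ℓ}) (by simp)]
  simpa using card_filter_val_sub_lt 0 hℓ

lemma val_lt_and_val_add_lt_iff {q d : ℕ} (h : q + 2 * d ≤ M) (y : ZMod M) :
    y.val < q + d ∧ (y + (d : ℕ)).val < q + d ↔ y.val < q := by
  have hd : (d : ZMod M).val = d := ZMod.val_natCast_of_lt (by have := NeZero.pos M; omega)
  constructor
  · rintro ⟨hy, hyd⟩
    rw [ZMod.val_add_of_lt (by omega), hd] at hyd
    omega
  · intro hy
    rw [ZMod.val_add_of_lt (by omega), hd]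
    omega

variable {ℓ : ℕ}

lemma val_sub_lt_or_val_sub_lt {x a b : ZMod M} (ha : (x - a).val < ℓ) (hb : (x - b).val < ℓ) :
    (a - b).val < ℓ ∨ (b - a).val < ℓ := by
  rcases le_total (x - a).val (x - b).val with h | h
  · left
    rw [show a - b = (x - b) - (x - a) by ring, ZMod.val_sub h]
    omega
  · right
    rw [show b - a = (x - a) - (x - b) by ring, ZMod.val_sub h]
    omega

lemma not_val_sub_lt_and_val_sub_add_lt (hℓ : 2 * ℓ ≤ M) (x a : ZMod M) :
    ¬ ((x - a).val < ℓ ∧ (x - (a + ℓ)).val < ℓ) := by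
  rintro ⟨ha, hb⟩
  have hℓM : ℓ < M := by have := NeZero.pos M; omega
  have : (x - a).val = (x - (a + ℓ)).val + ℓ := by
    rw [show x - a = (x - (a + ℓ)) + (ℓ : ℕ) by ring,
      ZMod.val_add_of_lt (by rw [ZMod.val_natCast_of_lt hℓM]; omega), ZMod.val_natCast_of_lt hℓM]
  omega

/-- Katona's circle lemma. -/
theorem card_le_of_forall_arcs_intersect (hℓ : 2 * ℓ ≤ M) {A : Finset (ZMod M)}
    (hA : ∀ a ∈ A, ∀ b ∈ A, ∃ x, (x - a).val < ℓ ∧ (x - b).val < ℓ) : #A ≤ ℓ := by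
  obtain rfl | ⟨a₀, ha₀⟩ := A.eq_empty_or_nonempty
  · simp
  have hℓM : ℓ < M := by have := NeZero.pos M; omega
  have hℓ0 : 0 < ℓ := by
    obtain ⟨x, hx, -⟩ := hA a₀ ha₀ a₀ ha₀
    omega
  -- An arc meeting the one at `a₀` starts less than `ℓ` after or before `a₀`; those starting
  -- before are shifted by `ℓ`, which is injective since the arcs at `b` and `b + ℓ` are disjoint.
  rw [← card_filter_val_sub_lt a₀ hℓM.le]
  refine card_le_card_of_injOn (fun a => if (a - a₀).val < ℓ then a else a + (ℓ : ℕ))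
    (fun a ha => ?_) (fun a ha b hb hab => ?_)
  · simp only [coe_filter, mem_univ, true_and, Set.mem_ofPred_eq]
    split_ifs with h
    · exact h
    obtain ⟨x, hxa, hxa₀⟩ := hA a ha a₀ ha₀
    have hu : (a₀ - a).val < ℓ := (val_sub_lt_or_val_sub_lt hxa hxa₀).resolve_left h
    have hu0 : (a₀ - a).val ≠ 0 := by
      rw [ne_eq, ZMod.val_eq_zero, sub_eq_zero]
      rintro rfl
      simp [hℓ0] at h
    rw [show a + (ℓ : ℕ) - a₀ = (ℓ : ℕ) - (a₀ - a) by ring,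
      ZMod.val_sub (by rw [ZMod.val_natCast_of_lt hℓM]; omega), ZMod.val_natCast_of_lt hℓM]
    omega
  · simp only at hab
    split_ifs at hab with h₁ h₂ h₂
    · exact hab
    · obtain ⟨x, hx⟩ := hA b hb a ha
      exact (not_val_sub_lt_and_val_sub_add_lt hℓ x b (hab ▸ hx)).elim
    · obtain ⟨x, hx⟩ := hA a ha b hb
      exact (not_val_sub_lt_and_val_sub_add_lt hℓ x a (hab ▸ hx)).elim
    · exact add_right_cancel hab

end Cycle

section ArcWindow

variable {V : Type*} [Fintype V] {M : ℕ}

def arcWindow (π : V → ZMod M) (ℓ : ℕ) (a : ZMod M) : Finset V := {v | (π v - a).val < ℓ}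

lemma mem_arcWindow {π : V → ZMod M} {ℓ : ℕ} {a : ZMod M} {v : V} :
    v ∈ arcWindow π ℓ a ↔ (π v - a).val < ℓ := by
  simp [arcWindow]

theorem card_le_card_filter_mem_of_orbit_arcWindow_eq {G : Type*} [Group G] [Fintype G]
    [MulAction G V] [DecidableEq V] {ℓ : ℕ} [NeZero M] (hℓ : 2 * ℓ ≤ M)
    {π : V → ZMod M} {𝓗 : Finset (Finset V)} (h𝓗 : ∀ a, orbit G (arcWindow π ℓ a) = 𝓗)
    {F : Finset (Finset V)} (hF : F ⊆ 𝓗) (hint : IsIntersecting F) (v₀ : V) :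
    #F ≤ #{H ∈ 𝓗 | v₀ ∈ H} := by
  refine card_le_card_of_forall_card_filter_smul_mem_le (x := arcWindow π ℓ 0)
    (fun a => h𝓗 0 ▸ h𝓗 a ▸ mem_orbit_self _) (h𝓗 0 ▸ by exact_mod_cast hF)
    (h𝓗 0 ▸ by exact_mod_cast filter_subset _ 𝓗) fun g => ?_
  have hstar : ∀ a, g • arcWindow π ℓ a ∈ {H ∈ 𝓗 | v₀ ∈ H} ↔ (π (g⁻¹ • v₀) - a).val < ℓ := by
    intro a
    rw [mem_filter, ← mem_coe, ← h𝓗 a, ← inv_smul_mem_iff, mem_arcWindow]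
    exact and_iff_right (mem_orbit _ g)
  simp only [hstar, card_filter_val_sub_lt' _ (by omega : ℓ ≤ M)]
  refine card_le_of_forall_arcs_intersect hℓ fun a ha b hb => ?_
  obtain ⟨y, hy⟩ := hint _ (mem_filter.1 ha).2 _ (mem_filter.1 hb).2
  rw [← smul_finset_inter, ← inv_smul_mem_iff, mem_inter, mem_arcWindow, mem_arcWindow] at hy
  exact ⟨_, hy⟩

end ArcWindow

section MatchingAut

variable {n p s : ℕ}

def matchingFlip (n : ℕ) : Equiv.Perm (Fin n × Bool) := (Equiv.refl _).prodCongr Equiv.boolNot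

abbrev matchingAut (n : ℕ) : Subgroup (Equiv.Perm (Fin n × Bool)) :=
  Subgroup.centralizer {matchingFlip n}

lemma matchingAut_smul_matchingFlip (g : matchingAut n) (v : Fin n × Bool) :
    g • matchingFlip n v = matchingFlip n (g • v) :=
  congrArg (· v) (Subgroup.mem_centralizer_singleton_iff.1 g.2)

lemma filter_matchingFlip_mem_eq (H : Finset (Fin n × Bool)) :
    {v ∈ H | matchingFlip n v ∈ H} =
      ({i | (i, false) ∈ H ∧ (i, true) ∈ H} : Finset (Fin n)) ×ˢ (univ : Finset Bool) := by
  ext ⟨i, b⟩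
  cases b <;> simp [matchingFlip, and_comm]

lemma mem_matchFamily_iff_card_filter_matchingFlip_mem {H : Finset (Fin n × Bool)} :
    H ∈ matchFamily n p s ↔ #H = 2 * p + s ∧ #{v ∈ H | matchingFlip n v ∈ H} = 2 * p := by
  rw [filter_matchingFlip_mem_eq, card_product, card_univ, Fintype.card_bool]
  simp only [matchFamily, mem_filter, mem_univ, true_and]
  omega

lemma smul_mem_matchFamily (g : matchingAut n) {H : Finset (Fin n × Bool)}
    (hH : H ∈ matchFamily n p s) : g • H ∈ matchFamily n p s := by
  have hfilter : {v ∈ g • H | matchingFlip n v ∈ g • H} =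
      g • {v ∈ H | matchingFlip n v ∈ H} := by
    ext v
    rw [← inv_smul_mem_iff, mem_filter, mem_filter, ← inv_smul_mem_iff, ← inv_smul_mem_iff,
      matchingAut_smul_matchingFlip]
  rw [mem_matchFamily_iff_card_filter_matchingFlip_mem] at hH ⊢
  rwa [hfilter, card_smul_finset, card_smul_finset]

def edgeCard (H : Finset (Fin n × Bool)) (i : Fin n) : ℕ := #{b | (i, b) ∈ H}

lemma edgeCard_eq (H : Finset (Fin n × Bool)) (i : Fin n) :
    edgeCard H i = (if (i, false) ∈ H then 1 else 0) + (if (i, true) ∈ H then 1 else 0) := by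
  rw [edgeCard, card_filter, Fintype.sum_bool, add_comm]

lemma card_eq_sum_edgeCard (H : Finset (Fin n × Bool)) : #H = ∑ i, edgeCard H i := by
  rw [← filter_univ_mem H, card_filter, Fintype.sum_prod_type]
  simp only [edgeCard, card_filter, filter_univ_mem]

lemma card_eq_card_filter_add_card_filter (H : Finset (Fin n × Bool)) :
    #H = #{i | (i, false) ∈ H} + #{i | (i, true) ∈ H} := by
  rw [card_eq_sum_edgeCard, card_filter, card_filter, ← sum_add_distrib]
  simp only [edgeCard_eq]

lemma card_filter_edgeCard_of_mem_matchFamily {H : Finset (Fin n × Bool)}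
    (hH : H ∈ matchFamily n p s) :
    #{i | edgeCard H i = 2} = p ∧ #{i | edgeCard H i = 1} = s ∧
      #{i | edgeCard H i = 0} = n - (p + s) := by
  simp only [matchFamily, mem_filter, mem_univ, true_and] at hH
  have hsplit : ∀ i, (if edgeCard H i = 0 then 1 else 0) + (if edgeCard H i = 1 then 1 else 0) +
        (if edgeCard H i = 2 then 1 else 0) = 1 ∧
      edgeCard H i =
        (if edgeCard H i = 1 then 1 else 0) + 2 * (if edgeCard H i = 2 then 1 else 0) := by
    intro i
    have := edgeCard_eq H i
    split_ifs at this ⊢ <;> omega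
  have h2 : #{i | edgeCard H i = 2} = p := by
    rw [← hH.2]
    congr 1
    ext i
    simp only [mem_filter, mem_univ, true_and, edgeCard_eq]
    split_ifs <;> simp_all
  have hcount :
      #{i | edgeCard H i = 0} + #{i | edgeCard H i = 1} + #{i | edgeCard H i = 2} = n := by
    simp only [card_filter, ← sum_add_distrib, (hsplit _).1, sum_const, card_univ,
      Fintype.card_fin, smul_eq_mul, mul_one]
  have hcard : #{i | edgeCard H i = 1} + 2 * #{i | edgeCard H i = 2} = 2 * p + s := by
    rw [← hH.1, card_eq_sum_edgeCard, card_filter, card_filter, mul_sum, ← sum_add_distrib]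
    exact sum_congr rfl fun i _ => (hsplit i).2.symm
  omega

lemma card_filter_edgeCard_eq_card_filter_edgeCard {H₁ H₂ : Finset (Fin n × Bool)}
    (h₁ : H₁ ∈ matchFamily n p s) (h₂ : H₂ ∈ matchFamily n p s) (k : ℕ) :
    #{i | edgeCard H₁ i = k} = #{i | edgeCard H₂ i = k} := by
  obtain ⟨h₁2, h₁1, h₁0⟩ := card_filter_edgeCard_of_mem_matchFamily h₁
  obtain ⟨h₂2, h₂1, h₂0⟩ := card_filter_edgeCard_of_mem_matchFamily h₂
  match k with
  | 0 => rw [h₁0, h₂0]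
  | 1 => rw [h₁1, h₂1]
  | 2 => rw [h₁2, h₂2]
  | k + 3 =>
    have hle : ∀ (H : Finset (Fin n × Bool)) i, edgeCard H i ≠ k + 3 := fun H i => by
      have := edgeCard_eq H i
      split_ifs at this <;> omega
    simp [hle]

lemma exists_smul_eq_of_mem_matchFamily {H₁ H₂ : Finset (Fin n × Bool)}
    (h₁ : H₁ ∈ matchFamily n p s) (h₂ : H₂ ∈ matchFamily n p s) :
    ∃ g : matchingAut n, g • H₁ = H₂ := by
  obtain ⟨q, hq⟩ := exists_equiv_comp_eq_of_card_fiber_eq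
    (card_filter_edgeCard_eq_card_filter_edgeCard h₁ h₂)
  -- Edge `i` of `H₁` and edge `q i` of `H₂` meet the sets equally often, so swapping the ends
  -- exactly when they disagree at the `true` end makes them agree at both ends.
  let σ : Fin n → Equiv.Perm Bool := fun i =>
    if ((i, true) ∈ H₁ ↔ (q i, true) ∈ H₂) then 1 else Equiv.boolNot
  let g : Equiv.Perm (Fin n × Bool) := q.prodShear σ
  have hg : g ∈ matchingAut n := by
    refine Subgroup.mem_centralizer_singleton_iff.2 (Equiv.ext fun ⟨i, b⟩ => ?_)
    simp [g, matchingFlip, Equiv.Perm.bool_apply_not]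
  have hmem : ∀ v, v ∈ H₁ ↔ g v ∈ H₂ := by
    rintro ⟨i, b⟩
    have := hq i
    rw [edgeCard_eq, edgeCard_eq] at this
    simp only [g, σ, Equiv.prodShear_apply]
    split_ifs at this ⊢ <;> cases b <;> simp_all
  refine ⟨⟨g, hg⟩, ?_⟩
  ext v
  rw [← inv_smul_mem_iff, hmem]
  exact iff_of_eq (congrArg (· ∈ H₂) (smul_inv_smul (⟨g, hg⟩ : matchingAut n) v))

lemma orbit_matchingAut_eq_matchFamily {H₀ : Finset (Fin n × Bool)}
    (h₀ : H₀ ∈ matchFamily n p s) : orbit (matchingAut n) H₀ = matchFamily n p s := by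
  ext H
  exact ⟨fun ⟨g, hg⟩ => hg ▸ smul_mem_matchFamily g h₀, exists_smul_eq_of_mem_matchFamily h₀⟩

theorem card_le_card_filter_mem_matchFamily_of_arcWindow_mem {M ℓ : ℕ} [NeZero M]
    (hℓ : 2 * ℓ ≤ M) {π : Fin n × Bool → ZMod M}
    (hπ : ∀ a, arcWindow π ℓ a ∈ matchFamily n p s) {F : Finset (Finset (Fin n × Bool))}
    (hF : F ⊆ matchFamily n p s) (hint : IsIntersecting F) (v₀ : Fin n × Bool) :
    #F ≤ #{H ∈ matchFamily n p s | v₀ ∈ H} :=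
  have := Fintype.ofFinite (matchingAut n)
  card_le_card_filter_mem_of_orbit_arcWindow_eq hℓ
    (fun a => orbit_matchingAut_eq_matchFamily (hπ a)) hF hint v₀

end MatchingAut

section CycleModels

variable {n p s : ℕ}

lemma card_filter_fin_natCast [NeZero n] (P : ZMod n → Prop) [DecidablePred P] :
    #{i : Fin n | P (i : ℕ)} = #{x : ZMod n | P x} := by
  refine card_nbij' (fun i => ((i : ℕ) : ZMod n)) (fun x => ⟨x.val, x.val_lt⟩)
    (fun i hi => by simpa using hi) (fun x hx => ?_) (fun i _ => ?_) (fun x _ => ?_)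
  · simpa [ZMod.natCast_zmod_val] using hx
  · ext
    simp [ZMod.val_natCast_of_lt i.isLt]
  · exact ZMod.natCast_zmod_val x

def cycleProjection (r : ℕ) (v : Fin n × Bool) : ZMod n :=
  ((v.1 + if v.2 then r else 0 : ℕ) : ZMod n)

lemma arcWindow_cycleProjection_mem_matchFamily {r : ℕ} (h : 2 * p + 2 * r ≤ n) [NeZero n]
    (a : ZMod n) : arcWindow (cycleProjection r) (p + r) a ∈ matchFamily n p (2 * r) := by
  have hshift : ∀ i : Fin n, cycleProjection r (i, true) - a =
      (cycleProjection r (i, false) - a) + (r : ℕ) := fun i => by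
    simp only [cycleProjection]
    push_cast
    ring
  have hside : ∀ b, #{i : Fin n | (i, b) ∈ arcWindow (cycleProjection r) (p + r) a} = p + r := by
    intro b
    have hsub : ∀ x : ZMod n, x + ((if b then r else 0 : ℕ) : ZMod n) - a =
        x - (a - ((if b then r else 0 : ℕ) : ZMod n)) := fun x => by ring
    simp only [mem_arcWindow, cycleProjection, Nat.cast_add, hsub]
    exact (card_filter_fin_natCast (fun x : ZMod n => (x - _).val < p + r)).trans
      (card_filter_val_sub_lt _ (by omega))
  have hchord : ∀ i : Fin n, (i, false) ∈ arcWindow (cycleProjection r) (p + r) a ∧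
      (i, true) ∈ arcWindow (cycleProjection r) (p + r) a ↔ (((i : ℕ) : ZMod n) - a).val < p := by
    intro i
    rw [mem_arcWindow, mem_arcWindow, hshift, val_lt_and_val_add_lt_iff (by omega)]
    simp [cycleProjection]
  simp only [matchFamily, mem_filter, mem_univ, true_and, hchord]
  refine ⟨by rw [card_eq_card_filter_add_card_filter, hside, hside]; ring, ?_⟩
  exact (card_filter_fin_natCast (fun x : ZMod n => (x - a).val < p)).trans
    (card_filter_val_sub_lt _ (by omega))

def cycleEmbedding (s : ℕ) (v : Fin n × Bool) : ZMod (2 * n) :=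
  ((2 * v.1 + if v.2 then s else 0 : ℕ) : ZMod (2 * n))

lemma cycleEmbedding_injective (hs : Odd s) : Function.Injective (cycleEmbedding (n := n) s) := by
  rintro ⟨i, b⟩ ⟨j, c⟩ h
  simp only [cycleEmbedding, ZMod.natCast_eq_natCast_iff] at h
  obtain ⟨r, rfl⟩ := hs
  have hbc : b = c := by
    have h2 := h.of_mul_right n
    cases b <;> cases c <;> simp_all [Nat.ModEq]
  subst hbc
  have hij := (Nat.ModEq.add_right_cancel' _ h).eq_of_lt_of_lt (by omega) (by omega)
  simp only [Prod.mk.injEq, and_true]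
  exact Fin.ext (by omega)

lemma card_filter_two_mul_val_sub_lt [NeZero n] (a : ZMod (2 * n)) {q : ℕ} (hq : q ≤ n) :
    #{i : Fin n | (((2 * i : ℕ) : ZMod (2 * n)) - a).val < 2 * q} = q := by
  -- With `j = ⌈a / 2⌉`, the offset of `2i` from `a` is `2 (i - j) + (2j - a)` where `i - j` is
  -- taken modulo `n` and `2j - a ∈ {0, 1}`.
  set j := (a.val + 1) / 2
  have key : ∀ i : Fin n, (((2 * i : ℕ) : ZMod (2 * n)) - a).val =
      2 * (((i : ℕ) : ZMod n) - (j : ℕ)).val + (2 * j - a.val) := by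
    intro i
    set u := (((i : ℕ) : ZMod n) - (j : ℕ)).val
    have hu : (i : ℕ) ≡ u + j [MOD n] := by
      rw [← ZMod.natCast_eq_natCast_iff, Nat.cast_add, ZMod.natCast_zmod_val, sub_add_cancel]
    have h2 : ((2 * i : ℕ) : ZMod (2 * n)) =
        ((2 * u + (2 * j - a.val) : ℕ) : ZMod (2 * n)) + (a.val : ZMod (2 * n)) := by
      rw [← Nat.cast_add, ZMod.natCast_eq_natCast_iff,
        show 2 * u + (2 * j - a.val) + a.val = 2 * (u + j) by omega]
      exact hu.mul_left' 2
    rw [ZMod.natCast_zmod_val] at h2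
    have hun : u < n := ZMod.val_lt _
    rw [h2, add_sub_cancel_right, ZMod.val_natCast_of_lt (by omega)]
  have hfilter : ∀ i : Fin n, (((2 * i : ℕ) : ZMod (2 * n)) - a).val < 2 * q ↔
      (((i : ℕ) : ZMod n) - (j : ℕ)).val < q := fun i => by
    rw [key]
    omega
  simp only [hfilter]
  exact (card_filter_fin_natCast (fun x : ZMod n => (x - _).val < q)).trans
    (card_filter_val_sub_lt _ hq)

lemma arcWindow_cycleEmbedding_mem_matchFamily (hs : Odd s) (h : 2 * p + s ≤ n) [NeZero n]
    (a : ZMod (2 * n)) : arcWindow (cycleEmbedding s) (2 * p + s) a ∈ matchFamily n p s := by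
  have hbij : Function.Bijective (cycleEmbedding (n := n) s) :=
    (Fintype.bijective_iff_injective_and_card _).2 ⟨cycleEmbedding_injective hs, by
      simp [ZMod.card, mul_comm]⟩
  have hshift : ∀ i : Fin n, cycleEmbedding s (i, true) - a =
      (cycleEmbedding s (i, false) - a) + (s : ℕ) := fun i => by
    simp only [cycleEmbedding]
    push_cast
    ring
  have hchord : ∀ i : Fin n, (i, false) ∈ arcWindow (cycleEmbedding s) (2 * p + s) a ∧
      (i, true) ∈ arcWindow (cycleEmbedding s) (2 * p + s) a ↔
        (((2 * i : ℕ) : ZMod (2 * n)) - a).val < 2 * p := by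
    intro i
    rw [mem_arcWindow, mem_arcWindow, hshift, val_lt_and_val_add_lt_iff (by omega)]
    simp [cycleEmbedding]
  simp only [matchFamily, mem_filter, mem_univ, true_and, hchord]
  refine ⟨?_, card_filter_two_mul_val_sub_lt a (by omega)⟩
  rw [card_equiv (Equiv.ofBijective _ hbij) (t := {x : ZMod (2 * n) | (x - a).val < 2 * p + s})
    (by simp [mem_arcWindow])]
  exact card_filter_val_sub_lt a (by omega)

end CycleModels

/-- For `1 ≤ 2p+s ≤ n`, the family `H^{(p,s)}(n)` is EKR: every intersecting
subfamily has size at most the size of the star centered at the vertex `(0, false)`. -/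
theorem matchFamily_EKR (n p s : ℕ) (h1 : 1 ≤ 2 * p + s) (h2 : 2 * p + s ≤ n)
    (F : Finset (Finset (Fin n × Bool))) (hF : F ⊆ matchFamily n p s)
    (hint : IsIntersecting F) :
    F.card ≤ ((matchFamily n p s).filter
      (fun H => ((⟨0, by omega⟩ : Fin n), false) ∈ H)).card := by
  have : NeZero n := ⟨by omega⟩
  rcases Nat.even_or_odd s with hs | hs
  · obtain ⟨r, rfl⟩ := even_iff_two_dvd.1 hs
    exact card_le_card_filter_mem_matchFamily_of_arcWindow_mem (by omega : 2 * (p + r) ≤ n)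
      (arcWindow_cycleProjection_mem_matchFamily h2) hF hint _
  · exact card_le_card_filter_mem_matchFamily_of_arcWindow_mem
      (by omega : 2 * (2 * p + s) ≤ 2 * n) (arcWindow_cycleEmbedding_mem_matchFamily hs h2)
      hF hint _
end

section
/- Let n, p, k be natural numbers with n ≥ 2p + 2k and p + k ≥ 1. For every i ∈ ZMod n, the even-case quasi-interval B_i has cardinality 2p + 2k, and exactly p elements x ∈ ZMod n satisfy both (x, false) ∈ B_i and (x, true) ∈ B_i. -/
/-- The even-case quasi-interval `B_i` in the double cycle `D_n = ZMod n × Bool`. -/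
def quasiB (n p k : ℕ) (i : ZMod n) : Finset (ZMod n × Bool) :=
  (Finset.range (p + k)).image (fun t : ℕ => ((i - (k : ZMod n) + (t : ZMod n)), false)) ∪
  (Finset.range (p + k)).image (fun t : ℕ => ((i + (t : ZMod n)), true))
/-- For `n ≥ 2p+2k` and `p+k ≥ 1`, each even-case quasi-interval `B_i`
has cardinality `2p+2k` and spans exactly `p` edges of the double cycle. -/
theorem quasiB_card_and_edges (n p k : ℕ) (hn : 2 * p + 2 * k ≤ n) (hpk : 1 ≤ p + k)
    (i : ZMod n) :
    (quasiB n p k i).card = 2 * p + 2 * k ∧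
    Set.ncard {x : ZMod n | (x, false) ∈ quasiB n p k i ∧ (x, true) ∈ quasiB n p k i} = p := by
  have hn0 : n ≠ 0 := by omega
  haveI : NeZero n := ⟨hn0⟩
  have hcast : ∀ a b : ℕ, a < n → b < n → (a : ZMod n) = b → a = b := by
    intro a b ha hb h
    have := congrArg ZMod.val h
    rwa [ZMod.val_cast_of_lt ha, ZMod.val_cast_of_lt hb] at this
  constructor
  · rw [quasiB, Finset.card_union_of_disjoint, Finset.card_image_of_injOn,
      Finset.card_image_of_injOn, Finset.card_range]
    · ring
    · intro a ha b hb h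
      simp only [Finset.coe_range, Set.mem_Iio] at ha hb
      have : (a : ZMod n) = b := by
        have := congrArg Prod.fst h
        simpa using this
      exact hcast a b (by omega) (by omega) this
    · intro a ha b hb h
      simp only [Finset.coe_range, Set.mem_Iio] at ha hb
      have : (a : ZMod n) = b := by
        have := congrArg Prod.fst h
        simpa using this
      exact hcast a b (by omega) (by omega) this
    · rw [Finset.disjoint_left]
      intro x hx hx'
      simp only [Finset.mem_image, Finset.mem_range] at hx hx'
      obtain ⟨t, _, rfl⟩ := hx
      obtain ⟨s, _, hs⟩ := hx'
      exact Bool.noConfusion (congrArg Prod.snd hs)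
  · have hset : {x : ZMod n | (x, false) ∈ quasiB n p k i ∧ (x, true) ∈ quasiB n p k i}
        = ↑((Finset.range p).image (fun s : ℕ => i + (s : ZMod n))) := by
      ext x
      simp only [quasiB, Finset.mem_union, Finset.mem_image, Finset.mem_range, Set.mem_setOf_eq,
        Prod.mk.injEq, Bool.false_eq_true, Bool.true_eq_false, and_false, false_and, exists_false,
        or_false, and_true, false_or, Finset.coe_image, Finset.coe_range, Set.mem_image,
        Set.mem_Iio]
      constructor
      · rintro ⟨⟨t, ht, hxt⟩, s, hs, hxs⟩
        have heq : (t : ZMod n) = ((s + k : ℕ) : ZMod n) := by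
          have : i - (k : ZMod n) + (t : ZMod n) = i + (s : ZMod n) := by rw [hxt, hxs]
          push_cast
          linear_combination this
        have htsk : t = s + k := hcast t (s + k) (by omega) (by omega) heq
        refine ⟨s, by omega, hxs⟩
      · rintro ⟨s, hs, hxs⟩
        refine ⟨⟨s + k, by omega, ?_⟩, ⟨s, by omega, hxs⟩⟩
        rw [← hxs]
        push_cast
        ring
    rw [hset, Set.ncard_coe_finset, Finset.card_image_of_injOn, Finset.card_range]
    intro a ha b hb h
    simp only [Finset.coe_range, Set.mem_Iio] at ha hb
    have : (a : ZMod n) = b := by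
      simpa using h
    exact hcast a b (by omega) (by omega) this
end

section
/- Let n, p, k be natural numbers with n ≥ 2p + 2k and p + k ≥ 1. For i, j ∈ ZMod n, the even-case quasi-intervals B_i and B_j have nonempty intersection if and only if there exists an integer d with |d| ≤ p + k − 1 such that j = i + d in ZMod n. -/
/-- For `n ≥ 2p+2k` and `p+k ≥ 1`, the quasi-intervals `B_i` and `B_j` intersect
iff `j = i + d` for some integer `d` with `|d| ≤ p+k-1`. -/
theorem quasiB_inter_iff (n p k : ℕ) (hn : 2 * p + 2 * k ≤ n) (hpk : 1 ≤ p + k)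
    (i j : ZMod n) :
    (quasiB n p k i ∩ quasiB n p k j).Nonempty ↔
      ∃ d : ℤ, |d| ≤ (p : ℤ) + k - 1 ∧ j = i + (d : ZMod n) := by
  constructor
  · rintro ⟨⟨x, b⟩, hx⟩
    rw [Finset.mem_inter] at hx
    obtain ⟨hi, hj⟩ := hx
    simp only [quasiB, Finset.mem_union, Finset.mem_image, Finset.mem_range,
      Prod.mk.injEq] at hi hj
    obtain ⟨t, ht, hxt, hbt⟩ | ⟨t, ht, hxt, hbt⟩ := hi <;>
      obtain ⟨s, hs, hxs, hbs⟩ | ⟨s, hs, hxs, hbs⟩ := hj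
    · refine ⟨(t : ℤ) - s, by rw [abs_le]; constructor <;> omega, ?_⟩
      have h : i - (k : ZMod n) + t = j - (k : ZMod n) + s := by rw [hxt, hxs]
      push_cast
      linear_combination -h
    · exact absurd (hbt.trans hbs.symm) Bool.false_ne_true
    · exact absurd (hbs.trans hbt.symm) Bool.false_ne_true
    · refine ⟨(t : ℤ) - s, by rw [abs_le]; constructor <;> omega, ?_⟩
      have h : i + (t : ZMod n) = j + s := by rw [hxt, hxs]
      push_cast
      linear_combination -h
  · rintro ⟨d, hd, rfl⟩
    rw [abs_le] at hd
    rcases le_or_gt 0 d with h | h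
    · refine ⟨(i + (d.toNat : ZMod n), true), Finset.mem_inter.mpr ⟨?_, ?_⟩⟩
      · simp only [quasiB, Finset.mem_union, Finset.mem_image, Finset.mem_range]
        exact Or.inr ⟨d.toNat, by omega, rfl⟩
      · simp only [quasiB, Finset.mem_union, Finset.mem_image, Finset.mem_range,
          Prod.mk.injEq]
        refine Or.inr ⟨0, by omega, ?_, trivial⟩
        have : ((d.toNat : ℤ) : ZMod n) = (d : ZMod n) := by
          rw [Int.toNat_of_nonneg h]
        push_cast at this ⊢
        rw [this]; ring
    · refine ⟨(i, true), Finset.mem_inter.mpr ⟨?_, ?_⟩⟩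
      · simp only [quasiB, Finset.mem_union, Finset.mem_image, Finset.mem_range,
          Prod.mk.injEq]
        exact Or.inr ⟨0, by omega, by push_cast; ring, trivial⟩
      · simp only [quasiB, Finset.mem_union, Finset.mem_image, Finset.mem_range,
          Prod.mk.injEq]
        refine Or.inr ⟨(-d).toNat, by omega, ?_, trivial⟩
        have : (((-d).toNat : ℤ) : ZMod n) = ((-d : ℤ) : ZMod n) := by
          rw [Int.toNat_of_nonneg (by omega)]
        push_cast at this ⊢
        rw [this]; ring
end

section
/- Let n, p, k be natural numbers with n ≥ 2p + 2k and p + k ≥ 1. If I ⊆ ZMod n is a set of indices such that the even-case quasi-intervals {B_i : i ∈ I} form an intersecting family (any two of them have nonempty intersection), then |I| ≤ p + k. -/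
/-- For `n ≥ 2p+2k` and `p+k ≥ 1`, an intersecting family of even-case
quasi-intervals has at most `p+k` members. -/
theorem quasiB_intersecting_card_le (n p k : ℕ) (hn : 2 * p + 2 * k ≤ n) (hpk : 1 ≤ p + k)
    (I : Finset (ZMod n))
    (hI : ∀ i ∈ I, ∀ j ∈ I, (quasiB n p k i ∩ quasiB n p k j).Nonempty) :
    I.card ≤ p + k := by
  classical
  set m := p + k with hm
  haveI : NeZero n := ⟨by omega⟩
  have hnm : 2 * m ≤ n := by omega
  have key : ∀ i ∈ I, ∀ j ∈ I, (i - j).val < m ∨ n - m < (i - j).val := by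
    intro i hi j hj
    obtain ⟨x, hx⟩ := hI i hi j hj
    rw [Finset.mem_inter] at hx
    obtain ⟨hxi, hxj⟩ := hx
    simp only [quasiB, Finset.mem_union, Finset.mem_image, Finset.mem_range, ← hm] at hxi hxj
    have hst : ∃ s t : ℕ, s < m ∧ t < m ∧ i - j = (s : ZMod n) - (t : ZMod n) := by
      rcases hxi with ⟨t, ht, hxt⟩ | ⟨t, ht, hxt⟩ <;>
      rcases hxj with ⟨s, hs, hxs⟩ | ⟨s, hs, hxs⟩ <;>
        [skip; (exfalso; have h1 := hxt.trans hxs.symm; simp at h1);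
         (exfalso; have h1 := hxt.trans hxs.symm; simp at h1); skip] <;>
      · refine ⟨s, t, hs, ht, ?_⟩
        have h1 := hxt.trans hxs.symm
        rw [Prod.mk.injEq] at h1
        linear_combination h1.1
    obtain ⟨s, t, hs, ht, heq⟩ := hst
    rcases le_or_gt t s with h | h
    · left
      have h2 : i - j = ((s - t : ℕ) : ZMod n) := by
        rw [Nat.cast_sub h, heq]
      rw [h2, ZMod.val_cast_of_lt (by omega)]
      omega
    · right
      have h2 : i - j = -(((t - s : ℕ) : ZMod n)) := by
        rw [Nat.cast_sub h.le, heq]; ring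
      have h3 : ((t - s : ℕ) : ZMod n) ≠ 0 := by
        intro h0
        have := ZMod.val_cast_of_lt (a := t - s) (n := n) (by omega)
        rw [h0, ZMod.val_zero] at this
        omega
      rw [h2, ZMod.neg_val, if_neg h3, ZMod.val_cast_of_lt (a := t - s) (n := n) (by omega)]
      omega
  rcases I.eq_empty_or_nonempty with rfl | ⟨i0, hi0⟩
  · simp
  · set f : ZMod n → ℕ :=
      fun j => if (j - i0).val < m then (j - i0).val else (j - i0).val - (n - m) with hf
    have hmaps : ∀ j ∈ I, f j ∈ Finset.range m := by
      intro j hj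
      have hd := key j hj i0 hi0
      have hv := (j - i0).val_lt
      simp only [hf, Finset.mem_range]
      split <;> omega
    have hmix : ∀ a ∈ I, ∀ b ∈ I, (a - i0).val < m → ¬ (b - i0).val < m →
        (b - i0).val - (n - m) = (a - i0).val → False := by
      intro a ha b hb hda hdb hfab
      have hkb := key b (Finset.mem_coe.mp hb) i0 hi0
      have hva := (a - i0).val_lt
      have hvb := (b - i0).val_lt
      have hnat : (b - i0).val = (a - i0).val + (n - m) := by omega
      have hcast : b - i0 = (a - i0) + ((n - m : ℕ) : ZMod n) := by
        have h1 : (((b - i0).val : ℕ) : ZMod n) = (((a - i0).val + (n - m) : ℕ) : ZMod n) := by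
          rw [hnat]
        rw [Nat.cast_add, ZMod.natCast_rightInverse, ZMod.natCast_rightInverse] at h1
        exact h1
      have hba : b - a = ((n - m : ℕ) : ZMod n) := by
        have : b - a = (b - i0) - (a - i0) := by ring
        rw [this, hcast]; ring
      have hval : (b - a).val = n - m := by
        rw [hba, ZMod.val_cast_of_lt (by omega)]
      rcases key b hb a ha with h | h <;> omega
    have hinj : Set.InjOn f I := by
      intro a ha b hb hfab
      simp only [hf] at hfab
      have hka := key a (Finset.mem_coe.mp ha) i0 hi0
      have hkb := key b (Finset.mem_coe.mp hb) i0 hi0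
      have hva := (a - i0).val_lt
      have hvb := (b - i0).val_lt
      have hval : (a - i0).val = (b - i0).val := by
        split at hfab <;> split at hfab
        · exact hfab
        · exact (hmix a (Finset.mem_coe.mp ha) b (Finset.mem_coe.mp hb) (by assumption)
            (by assumption) hfab.symm).elim
        · exact (hmix b (Finset.mem_coe.mp hb) a (Finset.mem_coe.mp ha) (by assumption)
            (by assumption) hfab).elim
        · omega
      have h1 : a - i0 = b - i0 := ZMod.val_injective n hval
      have h2 : a = b := by
        have := congrArg (· + i0) h1
        simpa using this
      exact h2
    calc I.card ≤ (Finset.range m).card := Finset.card_le_card_of_injOn f hmaps hinj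
      _ = m := Finset.card_range m
end

section
/- Let n, p, k be natural numbers with n ≥ 2p + 2k + 1. For every i ∈ Fin n, the odd-case quasi-intervals C_{2i} and C_{2i+1} each have cardinality 2p + 2k + 1, and for each of them exactly p elements x ∈ ZMod n satisfy that both (x, false) and (x, true) belong to it. -/
/-- The odd-case quasi-intervals `C_j ⊆ D_n = ZMod n × Bool` for `j ∈ ZMod (2n)`:
for `i ∈ ZMod n`, `C_{2i} = {(i-k-1+t, false) : t < p+k+1} ∪ {(i+t, true) : t < p+k}` and
`C_{2i+1} = {(i-k+t, false) : t < p+k} ∪ {(i+t, true) : t < p+k+1}`. -/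
def quasiC (n p k : ℕ) (j : ZMod (2 * n)) : Finset (ZMod n × Bool) :=
  let i : ZMod n := ((j.val / 2 : ℕ) : ZMod n)
  if j.val % 2 = 0 then
    (Finset.range (p + k + 1)).image
      (fun t : ℕ => ((i - (k : ZMod n) - 1 + (t : ZMod n)), false)) ∪
    (Finset.range (p + k)).image (fun t : ℕ => ((i + (t : ZMod n)), true))
  else
    (Finset.range (p + k)).image
      (fun t : ℕ => ((i - (k : ZMod n) + (t : ZMod n)), false)) ∪
    (Finset.range (p + k + 1)).image (fun t : ℕ => ((i + (t : ZMod n)), true))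

section Aux
variable {n : ℕ} [NeZero n]

lemma zmod_cast_inj {a b : ℕ} (ha : a < n) (hb : b < n) (h : (a : ZMod n) = b) : a = b := by
  have := congrArg ZMod.val h
  rwa [ZMod.val_cast_of_lt ha, ZMod.val_cast_of_lt hb] at this

lemma shift_injOn (m : ℕ) (hm : m ≤ n) (c : ZMod n) :
    Set.InjOn (fun t : ℕ => c + (t : ZMod n)) (Finset.range m) := by
  intro a ha b hb h
  simp only [Finset.coe_range, Set.mem_Iio] at ha hb
  exact zmod_cast_inj (lt_of_lt_of_le ha hm) (lt_of_lt_of_le hb hm) (add_left_cancel h)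

lemma card_pair (a b : ℕ) (ha : a ≤ n) (hb : b ≤ n) (c d : ZMod n) :
    (((Finset.range a).image (fun t : ℕ => (c + (t : ZMod n), false))) ∪
     ((Finset.range b).image (fun t : ℕ => (d + (t : ZMod n), true)))).card = a + b := by
  rw [Finset.card_union_of_disjoint, Finset.card_image_of_injOn, Finset.card_image_of_injOn,
    Finset.card_range, Finset.card_range]
  · exact fun x hx y hy h => shift_injOn b hb d hx hy (congrArg Prod.fst h)
  · exact fun x hx y hy h => shift_injOn a ha c hx hy (congrArg Prod.fst h)
  · rw [Finset.disjoint_left]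
    rintro ⟨z, bo⟩ h1 h2
    simp only [Finset.mem_image, Finset.mem_range, Prod.mk.injEq] at h1 h2
    obtain ⟨t, _, _, hb1⟩ := h1
    obtain ⟨s, _, _, hb2⟩ := h2
    rw [← hb1] at hb2; exact absurd hb2 (by simp)

end Aux

lemma quasiC_eval_even (n p k m : ℕ) (hm : 2 * m < 2 * n) :
    quasiC n p k ((2 * m : ℕ) : ZMod (2 * n)) =
    (Finset.range (p + k + 1)).image
      (fun t : ℕ => (((m : ZMod n) - (k : ZMod n) - 1 + (t : ZMod n)), false)) ∪
    (Finset.range (p + k)).image (fun t : ℕ => (((m : ZMod n) + (t : ZMod n)), true)) := by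
  haveI : NeZero (2 * n) := ⟨by omega⟩
  have hv : ((2 * m : ℕ) : ZMod (2 * n)).val = 2 * m := ZMod.val_cast_of_lt hm
  simp only [quasiC, hv]
  norm_num

lemma quasiC_eval_odd (n p k m : ℕ) (hm : 2 * m + 1 < 2 * n) :
    quasiC n p k ((2 * m + 1 : ℕ) : ZMod (2 * n)) =
    (Finset.range (p + k)).image
      (fun t : ℕ => (((m : ZMod n) - (k : ZMod n) + (t : ZMod n)), false)) ∪
    (Finset.range (p + k + 1)).image (fun t : ℕ => (((m : ZMod n) + (t : ZMod n)), true)) := by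
  haveI : NeZero (2 * n) := ⟨by omega⟩
  have hv : ((2 * m + 1 : ℕ) : ZMod (2 * n)).val = 2 * m + 1 := ZMod.val_cast_of_lt hm
  have h1 : (2 * m + 1) % 2 = 1 := by omega
  have h2 : (2 * m + 1) / 2 = m := by omega
  simp only [quasiC, hv, h1, h2]
  norm_num


/-- For `n ≥ 2p+2k+1` and `i ∈ Fin n`, the odd-case quasi-intervals `C_{2i}`
and `C_{2i+1}` each have cardinality `2p+2k+1` and each spans exactly `p` edges. -/
theorem quasiC_card_and_edges (n p k : ℕ) (hn : 2 * p + 2 * k + 1 ≤ n) (i : Fin n) :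
    (quasiC n p k ((2 * i.1 : ℕ) : ZMod (2 * n))).card = 2 * p + 2 * k + 1 ∧
    Set.ncard {x : ZMod n | (x, false) ∈ quasiC n p k ((2 * i.1 : ℕ) : ZMod (2 * n)) ∧
      (x, true) ∈ quasiC n p k ((2 * i.1 : ℕ) : ZMod (2 * n))} = p ∧
    (quasiC n p k ((2 * i.1 + 1 : ℕ) : ZMod (2 * n))).card = 2 * p + 2 * k + 1 ∧
    Set.ncard {x : ZMod n | (x, false) ∈ quasiC n p k ((2 * i.1 + 1 : ℕ) : ZMod (2 * n)) ∧
      (x, true) ∈ quasiC n p k ((2 * i.1 + 1 : ℕ) : ZMod (2 * n))} = p := by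
  haveI : NeZero n := ⟨by omega⟩
  obtain ⟨m, hm⟩ := i
  simp only []
  rw [quasiC_eval_even n p k m (by omega), quasiC_eval_odd n p k m (by omega)]
  refine ⟨?_, ?_, ?_, ?_⟩
  · rw [card_pair (p + k + 1) (p + k) (by omega) (by omega)]; omega
  · have hE : {x : ZMod n |
        (x, false) ∈ ((Finset.range (p + k + 1)).image
          (fun t : ℕ => (((m : ZMod n) - (k : ZMod n) - 1 + (t : ZMod n)), false)) ∪
        (Finset.range (p + k)).image (fun t : ℕ => (((m : ZMod n) + (t : ZMod n)), true))) ∧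
        (x, true) ∈ ((Finset.range (p + k + 1)).image
          (fun t : ℕ => (((m : ZMod n) - (k : ZMod n) - 1 + (t : ZMod n)), false)) ∪
        (Finset.range (p + k)).image (fun t : ℕ => (((m : ZMod n) + (t : ZMod n)), true)))} =
        ↑((Finset.range p).image (fun s : ℕ => (m : ZMod n) + (s : ZMod n))) := by
      ext x
      simp only [Set.mem_setOf_eq, Finset.mem_union, Finset.mem_image, Finset.mem_range,
        Prod.mk.injEq, and_false, and_true, exists_false, false_or, or_false, Finset.coe_image,
        Set.mem_image, Finset.mem_coe, Finset.coe_range, Set.mem_Iio, Bool.false_eq_true,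
        Bool.true_eq_false]
      constructor
      · rintro ⟨⟨t, ht, e1⟩, s, hs, e2⟩
        have hc : ((t : ℕ) : ZMod n) = ((s + k + 1 : ℕ) : ZMod n) := by
          push_cast
          linear_combination e1 - e2
        have : t = s + k + 1 := zmod_cast_inj (by omega) (by omega) hc
        exact ⟨s, by omega, e2⟩
      · rintro ⟨s, hs, e2⟩
        exact ⟨⟨s + k + 1, by omega, by push_cast; linear_combination e2⟩, s, by omega, e2⟩
    rw [hE, Set.ncard_coe_finset,
      Finset.card_image_of_injOn (shift_injOn p (by omega) _), Finset.card_range]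
  · rw [card_pair (p + k) (p + k + 1) (by omega) (by omega)]; omega
  · have hE : {x : ZMod n |
        (x, false) ∈ ((Finset.range (p + k)).image
          (fun t : ℕ => (((m : ZMod n) - (k : ZMod n) + (t : ZMod n)), false)) ∪
        (Finset.range (p + k + 1)).image (fun t : ℕ => (((m : ZMod n) + (t : ZMod n)), true))) ∧
        (x, true) ∈ ((Finset.range (p + k)).image
          (fun t : ℕ => (((m : ZMod n) - (k : ZMod n) + (t : ZMod n)), false)) ∪
        (Finset.range (p + k + 1)).image (fun t : ℕ => (((m : ZMod n) + (t : ZMod n)), true)))} =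
        ↑((Finset.range p).image (fun s : ℕ => (m : ZMod n) + (s : ZMod n))) := by
      ext x
      simp only [Set.mem_setOf_eq, Finset.mem_union, Finset.mem_image, Finset.mem_range,
        Prod.mk.injEq, and_false, and_true, exists_false, false_or, or_false, Finset.coe_image,
        Set.mem_image, Finset.mem_coe, Finset.coe_range, Set.mem_Iio, Bool.false_eq_true,
        Bool.true_eq_false]
      constructor
      · rintro ⟨⟨t, ht, e1⟩, s, hs, e2⟩
        have hc : ((t : ℕ) : ZMod n) = ((s + k : ℕ) : ZMod n) := by
          push_cast
          linear_combination e1 - e2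
        have : t = s + k := zmod_cast_inj (by omega) (by omega) hc
        exact ⟨s, by omega, e2⟩
      · rintro ⟨s, hs, e2⟩
        exact ⟨⟨s + k, by omega, by push_cast; linear_combination e2⟩, s, by omega, e2⟩
    rw [hE, Set.ncard_coe_finset,
      Finset.card_image_of_injOn (shift_injOn p (by omega) _), Finset.card_range]
end

section
/- Let n, p, k be natural numbers with n ≥ 2p + 2k + 1. For j, j' ∈ ZMod (2n), the odd-case quasi-intervals C_j and C_{j'} have nonempty intersection if and only if there exists an integer d with |d| ≤ 2p + 2k such that j' = j + d in ZMod (2n). -/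
private lemma interHelp {m : ℕ} (a b : ZMod m) (L L' : ℕ)
    (hLL : L ≤ L' + 1) (hLL' : L' ≤ L + 1) :
    (∃ t, t < L ∧ ∃ t', t' < L' ∧ a + (t : ZMod m) = b + (t' : ZMod m)) ↔
    ∃ d : ℤ, -(L' : ℤ) < d ∧ d < (L : ℤ) ∧ b = a + (d : ZMod m) := by
  constructor
  · rintro ⟨t, ht, t', ht', h⟩
    refine ⟨(t : ℤ) - t', by omega, by omega, ?_⟩
    push_cast
    linear_combination -h
  · rintro ⟨d, h1, h2, rfl⟩
    rcases le_or_gt 0 d with hd | hd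
    · have : ((d.toNat : ℕ) : ZMod m) = ((d : ℤ) : ZMod m) := by
        rw [← Int.cast_natCast, Int.toNat_of_nonneg hd]
      exact ⟨d.toNat, by omega, 0, by omega, by rw [this]; push_cast; ring⟩
    · have : (((-d).toNat : ℕ) : ZMod m) = ((-d : ℤ) : ZMod m) := by
        rw [← Int.cast_natCast, Int.toNat_of_nonneg (by omega : (0:ℤ) ≤ -d)]
      exact ⟨0, by omega, (-d).toNat, by omega, by rw [this]; push_cast; ring⟩

private lemma castEq (m : ℕ) (q q' : ℕ) (c : ℤ) :
    (((q' : ℕ) : ZMod m) = ((q : ℕ) : ZMod m) + (c : ZMod m)) ↔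
      (m : ℤ) ∣ ((q : ℤ) + c - (q' : ℤ)) := by
  have h1 : ((q' : ℕ) : ZMod m) = ((q' : ℤ) : ZMod m) := by push_cast; ring
  have h2 : ((q : ℕ) : ZMod m) + (c : ZMod m) = (((q : ℤ) + c : ℤ) : ZMod m) := by
    push_cast; ring
  rw [h1, h2, ZMod.intCast_eq_intCast_iff]
  exact Int.modEq_iff_dvd

private lemma part_inter (m : ℕ) (q q' : ℕ) (L L' : ℕ) (a b : ZMod m) (s : ℤ)
    (hLL : L ≤ L' + 1) (hLL' : L' ≤ L + 1)
    (hab : ∀ d : ℤ, (b = a + (d : ZMod m)) ↔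
      ((q' : ZMod m) = (q : ZMod m) + ((d + s : ℤ) : ZMod m))) :
    (∃ x : ZMod m, (∃ t, t < L ∧ a + (t : ZMod m) = x) ∧
        (∃ t', t' < L' ∧ b + (t' : ZMod m) = x)) ↔
    ∃ d : ℤ, -(L' : ℤ) < d ∧ d < (L : ℤ) ∧ (m : ℤ) ∣ ((q : ℤ) + (d + s) - (q' : ℤ)) := by
  constructor
  · rintro ⟨x, ⟨t, ht, rfl⟩, ⟨t', ht', h⟩⟩
    obtain ⟨d, h1, h2, h3⟩ := (interHelp a b L L' hLL hLL').mp ⟨t, ht, t', ht', h.symm⟩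
    exact ⟨d, h1, h2, (castEq m q q' (d + s)).mp ((hab d).mp h3)⟩
  · rintro ⟨d, h1, h2, h3⟩
    obtain ⟨t, ht, t', ht', h⟩ := (interHelp a b L L' hLL hLL').mpr
      ⟨d, h1, h2, (hab d).mpr ((castEq m q q' (d + s)).mpr h3)⟩
    exact ⟨a + t, ⟨t, ht, rfl⟩, ⟨t', ht', h.symm⟩⟩



/-- For `n ≥ 2p+2k+1`, the odd-case quasi-intervals `C_j` and `C_{j'}` intersect
iff `j' = j + d` for some integer `d` with `|d| ≤ 2p+2k`. -/
theorem quasiC_inter_iff (n p k : ℕ) (hn : 2 * p + 2 * k + 1 ≤ n) (j j' : ZMod (2 * n)) :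
    (quasiC n p k j ∩ quasiC n p k j').Nonempty ↔
      ∃ d : ℤ, |d| ≤ 2 * (p : ℤ) + 2 * k ∧ j' = j + (d : ZMod (2 * n)) := by
  haveI : NeZero (2 * n) := ⟨by omega⟩
  have key : (quasiC n p k j ∩ quasiC n p k j').Nonempty ↔
      ((∃ x : ZMod n, (x, false) ∈ quasiC n p k j ∧ (x, false) ∈ quasiC n p k j') ∨
       (∃ x : ZMod n, (x, true) ∈ quasiC n p k j ∧ (x, true) ∈ quasiC n p k j')) := by
    constructor
    · rintro ⟨⟨x, b⟩, hx⟩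
      rw [Finset.mem_inter] at hx
      cases b
      · exact Or.inl ⟨x, hx⟩
      · exact Or.inr ⟨x, hx⟩
    · rintro (⟨x, hx1, hx2⟩ | ⟨x, hx1, hx2⟩) <;> exact ⟨_, Finset.mem_inter.mpr ⟨hx1, hx2⟩⟩
  have hjc : j = ((j.val : ℕ) : ZMod (2 * n)) := by simp [ZMod.natCast_val, ZMod.cast_id]
  have hjc' : j' = ((j'.val : ℕ) : ZMod (2 * n)) := by simp [ZMod.natCast_val, ZMod.cast_id]
  have hR : ∀ d : ℤ, (j' = j + (d : ZMod (2 * n))) ↔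
      (2 * (n : ℤ)) ∣ ((j.val : ℤ) + d - (j'.val : ℤ)) := by
    intro d
    have hcast : ((2 * n : ℕ) : ℤ) = 2 * (n : ℤ) := by push_cast; ring
    conv_lhs => rw [hjc, hjc']
    rw [castEq, hcast]
  rcases Nat.mod_two_eq_zero_or_one j.val with h1 | h1 <;>
    rcases Nat.mod_two_eq_zero_or_one j'.val with h2 | h2
  -- branch (0,0)
  · have hv1 : (j.val : ℤ) = 2 * ((j.val / 2 : ℕ) : ℤ) := by omega
    have hv2 : (j'.val : ℤ) = 2 * ((j'.val / 2 : ℕ) : ℤ) := by omega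
    have memFj : ∀ x : ZMod n, ((x, false) ∈ quasiC n p k j ↔
        ∃ t, t < p + k + 1 ∧ (((j.val / 2 : ℕ) : ZMod n) - (k : ZMod n) - 1) + (t : ZMod n) = x) :=
      fun x => by simp [quasiC, h1]
    have memFj' : ∀ x : ZMod n, ((x, false) ∈ quasiC n p k j' ↔
        ∃ t, t < p + k + 1 ∧ (((j'.val / 2 : ℕ) : ZMod n) - (k : ZMod n) - 1) + (t : ZMod n) = x) :=
      fun x => by simp [quasiC, h2]
    have memTj : ∀ x : ZMod n, ((x, true) ∈ quasiC n p k j ↔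
        ∃ t, t < p + k ∧ (((j.val / 2 : ℕ) : ZMod n)) + (t : ZMod n) = x) :=
      fun x => by simp [quasiC, h1]
    have memTj' : ∀ x : ZMod n, ((x, true) ∈ quasiC n p k j' ↔
        ∃ t, t < p + k ∧ (((j'.val / 2 : ℕ) : ZMod n)) + (t : ZMod n) = x) :=
      fun x => by simp [quasiC, h2]
    have F : (∃ x : ZMod n, (x, false) ∈ quasiC n p k j ∧ (x, false) ∈ quasiC n p k j') ↔
        ∃ d : ℤ, -((p + k + 1 : ℕ) : ℤ) < d ∧ d < ((p + k + 1 : ℕ) : ℤ) ∧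
          (n : ℤ) ∣ (((j.val / 2 : ℕ) : ℤ) + (d + 0) - ((j'.val / 2 : ℕ) : ℤ)) := by
      rw [← part_inter n (j.val / 2) (j'.val / 2) (p + k + 1) (p + k + 1)
        (((j.val / 2 : ℕ) : ZMod n) - (k : ZMod n) - 1)
        (((j'.val / 2 : ℕ) : ZMod n) - (k : ZMod n) - 1) 0
        (by omega) (by omega)
        (fun d => by push_cast; constructor <;> intro h <;> linear_combination h)]
      exact exists_congr fun x => and_congr (memFj x) (memFj' x)
    have T : (∃ x : ZMod n, (x, true) ∈ quasiC n p k j ∧ (x, true) ∈ quasiC n p k j') ↔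
        ∃ d : ℤ, -((p + k : ℕ) : ℤ) < d ∧ d < ((p + k : ℕ) : ℤ) ∧
          (n : ℤ) ∣ (((j.val / 2 : ℕ) : ℤ) + (d + 0) - ((j'.val / 2 : ℕ) : ℤ)) := by
      rw [← part_inter n (j.val / 2) (j'.val / 2) (p + k) (p + k)
        (((j.val / 2 : ℕ) : ZMod n)) (((j'.val / 2 : ℕ) : ZMod n)) 0
        (by omega) (by omega)
        (fun d => by push_cast; constructor <;> intro h <;> linear_combination h)]
      exact exists_congr fun x => and_congr (memTj x) (memTj' x)
    rw [key, F, T]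
    simp only [hR]
    constructor
    · rintro (⟨d, hd1, hd2, c, hc⟩ | ⟨d, hd1, hd2, c, hc⟩) <;>
        exact ⟨2 * d, by rw [abs_le]; constructor <;> omega,
          c, by linarith⟩
    · rintro ⟨D, hD, c, hc⟩
      rw [abs_le] at hD
      obtain ⟨w, hw⟩ : ∃ w : ℤ, (n : ℤ) * c = w := ⟨_, rfl⟩
      have hc2 : (j.val : ℤ) + D - (j'.val : ℤ) = 2 * w := by rw [← hw]; linarith
      refine Or.inl ⟨w - ((j.val / 2 : ℕ) : ℤ) + ((j'.val / 2 : ℕ) : ℤ), by omega,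
        by omega, c, by linarith⟩
  -- branch (0,1)
  · have hv1 : (j.val : ℤ) = 2 * ((j.val / 2 : ℕ) : ℤ) := by omega
    have hv2 : (j'.val : ℤ) = 2 * ((j'.val / 2 : ℕ) : ℤ) + 1 := by omega
    have memFj : ∀ x : ZMod n, ((x, false) ∈ quasiC n p k j ↔
        ∃ t, t < p + k + 1 ∧ (((j.val / 2 : ℕ) : ZMod n) - (k : ZMod n) - 1) + (t : ZMod n) = x) :=
      fun x => by simp [quasiC, h1]
    have memFj' : ∀ x : ZMod n, ((x, false) ∈ quasiC n p k j' ↔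
        ∃ t, t < p + k ∧ (((j'.val / 2 : ℕ) : ZMod n) - (k : ZMod n)) + (t : ZMod n) = x) :=
      fun x => by simp [quasiC, h2]
    have memTj : ∀ x : ZMod n, ((x, true) ∈ quasiC n p k j ↔
        ∃ t, t < p + k ∧ (((j.val / 2 : ℕ) : ZMod n)) + (t : ZMod n) = x) :=
      fun x => by simp [quasiC, h1]
    have memTj' : ∀ x : ZMod n, ((x, true) ∈ quasiC n p k j' ↔
        ∃ t, t < p + k + 1 ∧ (((j'.val / 2 : ℕ) : ZMod n)) + (t : ZMod n) = x) :=
      fun x => by simp [quasiC, h2]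
    have F : (∃ x : ZMod n, (x, false) ∈ quasiC n p k j ∧ (x, false) ∈ quasiC n p k j') ↔
        ∃ d : ℤ, -((p + k : ℕ) : ℤ) < d ∧ d < ((p + k + 1 : ℕ) : ℤ) ∧
          (n : ℤ) ∣ (((j.val / 2 : ℕ) : ℤ) + (d + -1) - ((j'.val / 2 : ℕ) : ℤ)) := by
      rw [← part_inter n (j.val / 2) (j'.val / 2) (p + k + 1) (p + k)
        (((j.val / 2 : ℕ) : ZMod n) - (k : ZMod n) - 1)
        (((j'.val / 2 : ℕ) : ZMod n) - (k : ZMod n)) (-1)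
        (by omega) (by omega)
        (fun d => by push_cast; constructor <;> intro h <;> linear_combination h)]
      exact exists_congr fun x => and_congr (memFj x) (memFj' x)
    have T : (∃ x : ZMod n, (x, true) ∈ quasiC n p k j ∧ (x, true) ∈ quasiC n p k j') ↔
        ∃ d : ℤ, -((p + k + 1 : ℕ) : ℤ) < d ∧ d < ((p + k : ℕ) : ℤ) ∧
          (n : ℤ) ∣ (((j.val / 2 : ℕ) : ℤ) + (d + 0) - ((j'.val / 2 : ℕ) : ℤ)) := by
      rw [← part_inter n (j.val / 2) (j'.val / 2) (p + k) (p + k + 1)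
        (((j.val / 2 : ℕ) : ZMod n)) (((j'.val / 2 : ℕ) : ZMod n)) 0
        (by omega) (by omega)
        (fun d => by push_cast; constructor <;> intro h <;> linear_combination h)]
      exact exists_congr fun x => and_congr (memTj x) (memTj' x)
    rw [key, F, T]
    simp only [hR]
    constructor
    · rintro (⟨d, hd1, hd2, c, hc⟩ | ⟨d, hd1, hd2, c, hc⟩)
      · exact ⟨2 * d - 1, by rw [abs_le]; constructor <;> omega, c, by linarith⟩
      · exact ⟨2 * d + 1, by rw [abs_le]; constructor <;> omega, c, by linarith⟩
    · rintro ⟨D, hD, c, hc⟩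
      rw [abs_le] at hD
      obtain ⟨w, hw⟩ : ∃ w : ℤ, (n : ℤ) * c = w := ⟨_, rfl⟩
      have hc2 : (j.val : ℤ) + D - (j'.val : ℤ) = 2 * w := by rw [← hw]; linarith
      refine Or.inr ⟨w - ((j.val / 2 : ℕ) : ℤ) + ((j'.val / 2 : ℕ) : ℤ), by omega,
        by omega, c, by linarith⟩
  -- branch (1,0)
  · have hv1 : (j.val : ℤ) = 2 * ((j.val / 2 : ℕ) : ℤ) + 1 := by omega
    have hv2 : (j'.val : ℤ) = 2 * ((j'.val / 2 : ℕ) : ℤ) := by omega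
    have memFj : ∀ x : ZMod n, ((x, false) ∈ quasiC n p k j ↔
        ∃ t, t < p + k ∧ (((j.val / 2 : ℕ) : ZMod n) - (k : ZMod n)) + (t : ZMod n) = x) :=
      fun x => by simp [quasiC, h1]
    have memFj' : ∀ x : ZMod n, ((x, false) ∈ quasiC n p k j' ↔
        ∃ t, t < p + k + 1 ∧ (((j'.val / 2 : ℕ) : ZMod n) - (k : ZMod n) - 1) + (t : ZMod n) = x) :=
      fun x => by simp [quasiC, h2]
    have memTj : ∀ x : ZMod n, ((x, true) ∈ quasiC n p k j ↔
        ∃ t, t < p + k + 1 ∧ (((j.val / 2 : ℕ) : ZMod n)) + (t : ZMod n) = x) :=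
      fun x => by simp [quasiC, h1]
    have memTj' : ∀ x : ZMod n, ((x, true) ∈ quasiC n p k j' ↔
        ∃ t, t < p + k ∧ (((j'.val / 2 : ℕ) : ZMod n)) + (t : ZMod n) = x) :=
      fun x => by simp [quasiC, h2]
    have F : (∃ x : ZMod n, (x, false) ∈ quasiC n p k j ∧ (x, false) ∈ quasiC n p k j') ↔
        ∃ d : ℤ, -((p + k + 1 : ℕ) : ℤ) < d ∧ d < ((p + k : ℕ) : ℤ) ∧
          (n : ℤ) ∣ (((j.val / 2 : ℕ) : ℤ) + (d + 1) - ((j'.val / 2 : ℕ) : ℤ)) := by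
      rw [← part_inter n (j.val / 2) (j'.val / 2) (p + k) (p + k + 1)
        (((j.val / 2 : ℕ) : ZMod n) - (k : ZMod n))
        (((j'.val / 2 : ℕ) : ZMod n) - (k : ZMod n) - 1) 1
        (by omega) (by omega)
        (fun d => by push_cast; constructor <;> intro h <;> linear_combination h)]
      exact exists_congr fun x => and_congr (memFj x) (memFj' x)
    have T : (∃ x : ZMod n, (x, true) ∈ quasiC n p k j ∧ (x, true) ∈ quasiC n p k j') ↔
        ∃ d : ℤ, -((p + k : ℕ) : ℤ) < d ∧ d < ((p + k + 1 : ℕ) : ℤ) ∧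
          (n : ℤ) ∣ (((j.val / 2 : ℕ) : ℤ) + (d + 0) - ((j'.val / 2 : ℕ) : ℤ)) := by
      rw [← part_inter n (j.val / 2) (j'.val / 2) (p + k + 1) (p + k)
        (((j.val / 2 : ℕ) : ZMod n)) (((j'.val / 2 : ℕ) : ZMod n)) 0
        (by omega) (by omega)
        (fun d => by push_cast; constructor <;> intro h <;> linear_combination h)]
      exact exists_congr fun x => and_congr (memTj x) (memTj' x)
    rw [key, F, T]
    simp only [hR]
    constructor
    · rintro (⟨d, hd1, hd2, c, hc⟩ | ⟨d, hd1, hd2, c, hc⟩)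
      · exact ⟨2 * d + 1, by rw [abs_le]; constructor <;> omega, c, by linarith⟩
      · exact ⟨2 * d - 1, by rw [abs_le]; constructor <;> omega, c, by linarith⟩
    · rintro ⟨D, hD, c, hc⟩
      rw [abs_le] at hD
      obtain ⟨w, hw⟩ : ∃ w : ℤ, (n : ℤ) * c = w := ⟨_, rfl⟩
      have hc2 : (j.val : ℤ) + D - (j'.val : ℤ) = 2 * w := by rw [← hw]; linarith
      refine Or.inr ⟨w - ((j.val / 2 : ℕ) : ℤ) + ((j'.val / 2 : ℕ) : ℤ), by omega,
        by omega, c, by linarith⟩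
  -- branch (1,1)
  · have hv1 : (j.val : ℤ) = 2 * ((j.val / 2 : ℕ) : ℤ) + 1 := by omega
    have hv2 : (j'.val : ℤ) = 2 * ((j'.val / 2 : ℕ) : ℤ) + 1 := by omega
    have memFj : ∀ x : ZMod n, ((x, false) ∈ quasiC n p k j ↔
        ∃ t, t < p + k ∧ (((j.val / 2 : ℕ) : ZMod n) - (k : ZMod n)) + (t : ZMod n) = x) :=
      fun x => by simp [quasiC, h1]
    have memFj' : ∀ x : ZMod n, ((x, false) ∈ quasiC n p k j' ↔
        ∃ t, t < p + k ∧ (((j'.val / 2 : ℕ) : ZMod n) - (k : ZMod n)) + (t : ZMod n) = x) :=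
      fun x => by simp [quasiC, h2]
    have memTj : ∀ x : ZMod n, ((x, true) ∈ quasiC n p k j ↔
        ∃ t, t < p + k + 1 ∧ (((j.val / 2 : ℕ) : ZMod n)) + (t : ZMod n) = x) :=
      fun x => by simp [quasiC, h1]
    have memTj' : ∀ x : ZMod n, ((x, true) ∈ quasiC n p k j' ↔
        ∃ t, t < p + k + 1 ∧ (((j'.val / 2 : ℕ) : ZMod n)) + (t : ZMod n) = x) :=
      fun x => by simp [quasiC, h2]
    have F : (∃ x : ZMod n, (x, false) ∈ quasiC n p k j ∧ (x, false) ∈ quasiC n p k j') ↔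
        ∃ d : ℤ, -((p + k : ℕ) : ℤ) < d ∧ d < ((p + k : ℕ) : ℤ) ∧
          (n : ℤ) ∣ (((j.val / 2 : ℕ) : ℤ) + (d + 0) - ((j'.val / 2 : ℕ) : ℤ)) := by
      rw [← part_inter n (j.val / 2) (j'.val / 2) (p + k) (p + k)
        (((j.val / 2 : ℕ) : ZMod n) - (k : ZMod n))
        (((j'.val / 2 : ℕ) : ZMod n) - (k : ZMod n)) 0
        (by omega) (by omega)
        (fun d => by push_cast; constructor <;> intro h <;> linear_combination h)]
      exact exists_congr fun x => and_congr (memFj x) (memFj' x)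
    have T : (∃ x : ZMod n, (x, true) ∈ quasiC n p k j ∧ (x, true) ∈ quasiC n p k j') ↔
        ∃ d : ℤ, -((p + k + 1 : ℕ) : ℤ) < d ∧ d < ((p + k + 1 : ℕ) : ℤ) ∧
          (n : ℤ) ∣ (((j.val / 2 : ℕ) : ℤ) + (d + 0) - ((j'.val / 2 : ℕ) : ℤ)) := by
      rw [← part_inter n (j.val / 2) (j'.val / 2) (p + k + 1) (p + k + 1)
        (((j.val / 2 : ℕ) : ZMod n)) (((j'.val / 2 : ℕ) : ZMod n)) 0
        (by omega) (by omega)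
        (fun d => by push_cast; constructor <;> intro h <;> linear_combination h)]
      exact exists_congr fun x => and_congr (memTj x) (memTj' x)
    rw [key, F, T]
    simp only [hR]
    constructor
    · rintro (⟨d, hd1, hd2, c, hc⟩ | ⟨d, hd1, hd2, c, hc⟩) <;>
        exact ⟨2 * d, by rw [abs_le]; constructor <;> omega, c, by linarith⟩
    · rintro ⟨D, hD, c, hc⟩
      rw [abs_le] at hD
      obtain ⟨w, hw⟩ : ∃ w : ℤ, (n : ℤ) * c = w := ⟨_, rfl⟩
      have hc2 : (j.val : ℤ) + D - (j'.val : ℤ) = 2 * w := by rw [← hw]; linarith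
      refine Or.inr ⟨w - ((j.val / 2 : ℕ) : ℤ) + ((j'.val / 2 : ℕ) : ℤ), by omega,
        by omega, c, by linarith⟩
end

section
/- Let n, p, k be natural numbers with n ≥ 2p + 2k and p + k ≥ 1, and let φ be a proper mapping. Then for every i ∈ ZMod n, the preimage under φ of the even-case quasi-interval B_i is a member of H^{(p,2k)}(n); that is, it has cardinality 2p + 2k and exactly p indices j ∈ Fin n satisfy that both (j, false) and (j, true) belong to the preimage. -/
/-- A proper mapping: a bijection `V(M_n) → D_n` sending the two endpoints of each edge
of `M_n` to two elements of the double cycle with the same first coordinate. -/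
def IsProperMapping (n : ℕ) (φ : (Fin n × Bool) ≃ (ZMod n × Bool)) : Prop :=
  ∀ i : Fin n, (φ (i, false)).1 = (φ (i, true)).1

/-- For `n ≥ 2p+2k`, `p+k ≥ 1` and a proper mapping `φ`, the preimage of every
even-case quasi-interval `B_i` under `φ` belongs to `H^{(p,2k)}(n)`. -/
theorem properMapping_preimage_quasiB_mem (n p k : ℕ) (hn : 2 * p + 2 * k ≤ n)
    (hpk : 1 ≤ p + k) (φ : (Fin n × Bool) ≃ (ZMod n × Bool)) (hφ : IsProperMapping n φ)
    (i : ZMod n) :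
    (quasiB n p k i).image φ.symm ∈ matchFamily n p (2 * k) := by
  have hn0 : 0 < n := by omega
  haveI : NeZero n := ⟨hn0.ne'⟩
  have hcast : ∀ a b : ℕ, a < n → b < n → (a : ZMod n) = b → a = b := by
    intro a b ha hb h
    have := congrArg ZMod.val h
    rwa [ZMod.val_cast_of_lt ha, ZMod.val_cast_of_lt hb] at this
  -- cardinality of quasiB
  have hdisj : Disjoint
      ((Finset.range (p + k)).image (fun t : ℕ => ((i - (k : ZMod n) + (t : ZMod n)), false)))
      ((Finset.range (p + k)).image (fun t : ℕ => ((i + (t : ZMod n)), true))) := by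
    rw [Finset.disjoint_left]
    rintro ⟨c, b⟩ h1 h2
    simp only [Finset.mem_image, Finset.mem_range, Prod.mk.injEq] at h1 h2
    obtain ⟨t, _, _, hb⟩ := h1
    obtain ⟨t', _, _, hb'⟩ := h2
    rw [← hb] at hb'; exact Bool.noConfusion hb'
  have hinj1 : ∀ t₁ ∈ Finset.range (p + k), ∀ t₂ ∈ Finset.range (p + k),
      (t₁ : ZMod n) = (t₂ : ZMod n) → t₁ = t₂ := by
    intro t₁ h1 t₂ h2 h
    simp only [Finset.mem_range] at h1 h2
    exact hcast _ _ (by omega) (by omega) h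
  have hcardB : (quasiB n p k i).card = 2 * p + 2 * k := by
    rw [quasiB, Finset.card_union_of_disjoint hdisj,
      Finset.card_image_of_injOn, Finset.card_image_of_injOn, Finset.card_range]
    · omega
    · intro t₁ h1 t₂ h2 h
      simp only [Prod.mk.injEq] at h
      exact hinj1 t₁ h1 t₂ h2 (by have := h.1; exact add_left_cancel this)
    · intro t₁ h1 t₂ h2 h
      simp only [Prod.mk.injEq] at h
      exact hinj1 t₁ h1 t₂ h2 (by have := h.1; exact add_left_cancel this)
  -- membership characterization
  have hmemB : ∀ x : ZMod n × Bool, x ∈ quasiB n p k i ↔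
      (∃ t < p + k, x = (i - (k : ZMod n) + (t : ZMod n), false)) ∨
      (∃ t < p + k, x = (i + (t : ZMod n), true)) := by
    intro x
    simp only [quasiB, Finset.mem_union, Finset.mem_image, Finset.mem_range]
    constructor
    · rintro (⟨t, ht, rfl⟩ | ⟨t, ht, rfl⟩)
      · exact Or.inl ⟨t, ht, rfl⟩
      · exact Or.inr ⟨t, ht, rfl⟩
    · rintro (⟨t, ht, rfl⟩ | ⟨t, ht, rfl⟩)
      · exact Or.inl ⟨t, ht, rfl⟩
      · exact Or.inr ⟨t, ht, rfl⟩
  have hmemF : ∀ c : ZMod n, (c, false) ∈ quasiB n p k i ↔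
      ∃ t < p + k, c = i - (k : ZMod n) + (t : ZMod n) := by
    intro c
    rw [hmemB]
    constructor
    · rintro (⟨t, ht, h⟩ | ⟨t, ht, h⟩)
      · exact ⟨t, ht, (Prod.mk.injEq .. ▸ h).1⟩
      · exact Bool.noConfusion (Prod.mk.injEq .. ▸ h).2
    · rintro ⟨t, ht, rfl⟩; exact Or.inl ⟨t, ht, rfl⟩
  have hmemT : ∀ c : ZMod n, (c, true) ∈ quasiB n p k i ↔
      ∃ t < p + k, c = i + (t : ZMod n) := by
    intro c
    rw [hmemB]
    constructor
    · rintro (⟨t, ht, h⟩ | ⟨t, ht, h⟩)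
      · exact Bool.noConfusion (Prod.mk.injEq .. ▸ h).2
      · exact ⟨t, ht, (Prod.mk.injEq .. ▸ h).1⟩
    · rintro ⟨t, ht, rfl⟩; exact Or.inr ⟨t, ht, rfl⟩
  -- both colors at c
  have hboth : ∀ c : ZMod n,
      ((c, false) ∈ quasiB n p k i ∧ (c, true) ∈ quasiB n p k i) ↔
      ∃ t < p, c = i + (t : ZMod n) := by
    intro c
    rw [hmemF, hmemT]
    constructor
    · rintro ⟨⟨t₁, ht₁, h1⟩, ⟨t₂, ht₂, h2⟩⟩
      have heq : ((t₂ + k : ℕ) : ZMod n) = (t₁ : ZMod n) := by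
        have : i - (k : ZMod n) + (t₁ : ZMod n) = i + (t₂ : ZMod n) := h1 ▸ h2
        push_cast
        linear_combination -this
      have : t₂ + k = t₁ := hcast _ _ (by omega) (by omega) heq
      exact ⟨t₂, by omega, h2⟩
    · rintro ⟨t, ht, rfl⟩
      refine ⟨⟨t + k, by omega, ?_⟩, ⟨t, by omega, rfl⟩⟩
      push_cast
      ring
  -- the map ψ
  set ψ : Fin n → ZMod n := fun j => (φ (j, false)).1 with hψ
  have hne : ∀ j : Fin n, (φ (j, false)).2 ≠ (φ (j, true)).2 := by
    intro j h
    have : φ (j, false) = φ (j, true) := Prod.ext (hφ j) h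
    have := φ.injective this
    simp at this
  have hψinj : Function.Injective ψ := by
    intro j j' h
    by_cases hb : (φ (j, false)).2 = (φ (j', false)).2
    · have : φ (j, false) = φ (j', false) := Prod.ext h hb
      exact (Prod.mk.injEq .. ▸ φ.injective this).1
    · have hb2 : (φ (j, false)).2 = (φ (j', true)).2 := by
        have := hne j'
        revert hb this
        cases (φ (j, false)).2 <;> cases (φ (j', false)).2 <;>
          cases (φ (j', true)).2 <;> simp
      have : φ (j, false) = φ (j', true) := Prod.ext (h.trans (hφ j')) hb2
      have := φ.injective this
      simp at this
  have hψbij : Function.Bijective ψ := by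
    rw [Fintype.bijective_iff_injective_and_card]
    exact ⟨hψinj, by simp [ZMod.card]⟩
  -- the target set S
  set S : Finset (ZMod n) := (Finset.range p).image (fun t : ℕ => i + (t : ZMod n)) with hS
  have hScard : S.card = p := by
    rw [hS, Finset.card_image_of_injOn, Finset.card_range]
    intro t₁ h1 t₂ h2 h
    simp only [Finset.mem_coe, Finset.mem_range] at h1 h2
    exact hcast _ _ (by omega) (by omega) (add_left_cancel h)
  -- membership in the image
  have hmemI : ∀ x : Fin n × Bool,
      x ∈ (quasiB n p k i).image φ.symm ↔ φ x ∈ quasiB n p k i := by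
    intro x
    simp only [Finset.mem_image]
    constructor
    · rintro ⟨y, hy, rfl⟩; simpa using hy
    · intro h; exact ⟨φ x, h, by simp⟩
  -- the key characterization of matched indices
  have hkey : ∀ j : Fin n,
      ((j, false) ∈ (quasiB n p k i).image φ.symm ∧
       (j, true) ∈ (quasiB n p k i).image φ.symm) ↔ ψ j ∈ S := by
    intro j
    rw [hmemI, hmemI]
    have h1 : (φ (j, true)).1 = ψ j := (hφ j).symm
    have hSc : ∀ c : ZMod n, c ∈ S ↔ ∃ t < p, c = i + (t : ZMod n) := by
      intro c
      simp only [hS, Finset.mem_image, Finset.mem_range]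
      constructor
      · rintro ⟨t, ht, rfl⟩; exact ⟨t, ht, rfl⟩
      · rintro ⟨t, ht, rfl⟩; exact ⟨t, ht, rfl⟩
    rw [hSc, ← hboth]
    have e0 : φ (j, false) = (ψ j, (φ (j, false)).2) := rfl
    have e1 : φ (j, true) = (ψ j, (φ (j, true)).2) := Prod.ext h1 rfl
    rw [e0, e1]
    have := hne j
    revert this
    cases (φ (j, false)).2 <;> cases (φ (j, true)).2 <;> simp <;> try tauto
  -- count matched indices
  have hcount :
      (Finset.univ.filter (fun j : Fin n =>
        (j, false) ∈ (quasiB n p k i).image φ.symm ∧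
        (j, true) ∈ (quasiB n p k i).image φ.symm)).card = p := by
    have hfe : (Finset.univ.filter (fun j : Fin n =>
        (j, false) ∈ (quasiB n p k i).image φ.symm ∧
        (j, true) ∈ (quasiB n p k i).image φ.symm)) =
        Finset.univ.filter (fun j : Fin n => ψ j ∈ S) := by
      apply Finset.filter_congr
      intro j _
      exact hkey j
    rw [hfe]
    have himg : (Finset.univ.filter (fun j : Fin n => ψ j ∈ S)).image ψ = S := by
      ext c
      simp only [Finset.mem_image, Finset.mem_filter, Finset.mem_univ, true_and]
      constructor
      · rintro ⟨j, hj, rfl⟩; exact hj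
      · intro hc
        obtain ⟨j, rfl⟩ := hψbij.surjective c
        exact ⟨j, hc, rfl⟩
    calc (Finset.univ.filter (fun j : Fin n => ψ j ∈ S)).card
        = ((Finset.univ.filter (fun j : Fin n => ψ j ∈ S)).image ψ).card :=
          (Finset.card_image_of_injective _ hψinj).symm
      _ = S.card := by rw [himg]
      _ = p := hScard
  -- assemble
  simp only [matchFamily, Finset.mem_filter, Finset.mem_univ, true_and]
  refine ⟨?_, hcount⟩
  rw [Finset.card_image_of_injective _ φ.symm.injective, hcardB]
end

section
/- Let n, p, k be natural numbers with n ≥ 2p + 2k and p + k ≥ 1, and let φ be a proper mapping. Then there exists exactly one H ∈ H^{(p,2k)}(n) whose image under φ equals the even-case quasi-interval B_0. -/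
lemma natCast_zmod_inj {n : ℕ} [NeZero n] {a b : ℕ} (ha : a < n) (hb : b < n)
    (h : (a : ZMod n) = (b : ZMod n)) : a = b := by
  have := congrArg ZMod.val h
  rwa [ZMod.val_cast_of_lt ha, ZMod.val_cast_of_lt hb] at this

lemma mem_quasiB_false {n p k : ℕ} {c : ZMod n} :
    (c, false) ∈ quasiB n p k 0 ↔ ∃ t < p + k, (0 : ZMod n) - k + t = c := by
  simp [quasiB, Prod.ext_iff, eq_comm]

lemma mem_quasiB_true {n p k : ℕ} {c : ZMod n} :
    (c, true) ∈ quasiB n p k 0 ↔ ∃ t < p + k, (t : ZMod n) = c := by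
  simp [quasiB, Prod.ext_iff, eq_comm]

lemma card_quasiB (n p k : ℕ) (hn : 2 * p + 2 * k ≤ n) (hpk : 1 ≤ p + k) :
    (quasiB n p k 0).card = 2 * p + 2 * k := by
  haveI : NeZero n := ⟨by omega⟩
  have hinj : ∀ c : ZMod n, Set.InjOn (fun t : ℕ => c + (t : ZMod n)) (Finset.range (p + k)) := by
    intro c t₁ h₁ t₂ h₂ h
    simp only [Finset.coe_range, Set.mem_Iio] at h₁ h₂
    exact natCast_zmod_inj (n := n) (a := t₁) (b := t₂) (by omega) (by omega)
      (by simpa using add_left_cancel h)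
  rw [quasiB, Finset.card_union_of_disjoint, Finset.card_image_of_injOn,
    Finset.card_image_of_injOn, Finset.card_range]
  · ring
  · intro t₁ h₁ t₂ h₂ h
    exact hinj ((0 : ZMod n) - k) h₁ h₂ (by simpa [Prod.ext_iff] using h)
  · intro t₁ h₁ t₂ h₂ h
    exact hinj (0 : ZMod n) h₁ h₂ (by simpa [Prod.ext_iff] using h)
  · rw [Finset.disjoint_left]
    rintro a ha hb
    simp only [Finset.mem_image, Finset.mem_range] at ha hb
    obtain ⟨t₁, -, rfl⟩ := ha
    obtain ⟨t₂, -, h⟩ := hb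
    simpa using congrArg Prod.snd h

/-- For `n ≥ 2p+2k`, `p+k ≥ 1` and a proper mapping `φ`, there is exactly one
`H ∈ H^{(p,2k)}(n)` with `φ(H) = B_0`. -/
theorem properMapping_existsUnique_image_quasiB (n p k : ℕ) (hn : 2 * p + 2 * k ≤ n)
    (hpk : 1 ≤ p + k) (φ : (Fin n × Bool) ≃ (ZMod n × Bool)) (hφ : IsProperMapping n φ) :
    ∃! H, H ∈ matchFamily n p (2 * k) ∧ H.image φ = quasiB n p k 0 := by
  haveI : NeZero n := ⟨by omega⟩
  set B := quasiB n p k 0 with hB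
  set H₀ : Finset (Fin n × Bool) := B.image φ.symm with hH₀
  have himg : H₀.image φ = B := by
    rw [hH₀, Finset.image_image]
    simp
  have hmemH₀ : ∀ x : Fin n × Bool, x ∈ H₀ ↔ φ x ∈ B := by
    intro x
    simp only [hH₀, Finset.mem_image]
    constructor
    · rintro ⟨y, hy, rfl⟩; simpa using hy
    · intro h; exact ⟨φ x, h, by simp⟩
  set ψ : Fin n → ZMod n := fun i => (φ (i, false)).1 with hψ
  have key : ∀ i : Fin n, (φ (i, false) = (ψ i, false) ∧ φ (i, true) = (ψ i, true)) ∨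
      (φ (i, false) = (ψ i, true) ∧ φ (i, true) = (ψ i, false)) := by
    intro i
    have h1 : (φ (i, false)).1 = ψ i := rfl
    have h2 : (φ (i, true)).1 = ψ i := (hφ i).symm
    have hne : (φ (i, false)).2 ≠ (φ (i, true)).2 := fun h => by
      simpa using φ.injective (Prod.ext (h1.trans h2.symm) h)
    have e1 : φ (i, false) = (ψ i, (φ (i, false)).2) := Prod.ext h1 rfl
    have e2 : φ (i, true) = (ψ i, (φ (i, true)).2) := Prod.ext h2 rfl
    rcases Bool.eq_false_or_eq_true (φ (i, false)).2 with hb | hb <;>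
      rcases Bool.eq_false_or_eq_true (φ (i, true)).2 with hc | hc
    · exact absurd (hb.trans hc.symm) hne
    · exact Or.inr ⟨by rw [e1, hb], by rw [e2, hc]⟩
    · exact Or.inl ⟨by rw [e1, hb], by rw [e2, hc]⟩
    · exact absurd (hb.trans hc.symm) hne
  have hψinj : Function.Injective ψ := by
    intro i j h
    rcases key i with ⟨hi1, hi2⟩ | ⟨hi1, hi2⟩ <;> rcases key j with ⟨hj1, hj2⟩ | ⟨hj1, hj2⟩
    · have := φ.injective (hi1.trans (h ▸ hj1.symm)); simpa using this
    · have := φ.injective (hi1.trans (h ▸ hj2.symm)); simpa using this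
    · have := φ.injective (hi1.trans (h ▸ hj2.symm)); simpa using this
    · have := φ.injective (hi1.trans (h ▸ hj1.symm)); simpa using this
  have hψsurj : Function.Surjective ψ := by
    have : Function.Bijective ψ := by
      rw [Fintype.bijective_iff_injective_and_card]
      exact ⟨hψinj, by simp [ZMod.card]⟩
    exact this.2
  -- matched condition
  have hcond : ∀ i : Fin n, ((i, false) ∈ H₀ ∧ (i, true) ∈ H₀) ↔
      ((ψ i, false) ∈ B ∧ (ψ i, true) ∈ B) := by
    intro i
    rw [hmemH₀, hmemH₀]
    rcases key i with ⟨h1, h2⟩ | ⟨h1, h2⟩ <;> rw [h1, h2] <;> tauto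
  -- the set S of matched coordinates
  set S : Finset (ZMod n) :=
    Finset.univ.filter (fun c => (c, false) ∈ B ∧ (c, true) ∈ B) with hS
  have hmemS : ∀ c : ZMod n, c ∈ S ↔ ((c, false) ∈ B ∧ (c, true) ∈ B) := by
    intro c; simp [hS]
  have hScard : S.card = p := by
    have hSeq : S = (Finset.range p).image (fun t : ℕ => (t : ZMod n)) := by
      ext c
      simp only [hS, Finset.mem_filter, Finset.mem_univ, true_and, Finset.mem_image,
        Finset.mem_range, hB, mem_quasiB_false, mem_quasiB_true]
      constructor
      · rintro ⟨⟨t₁, ht₁, hc₁⟩, ⟨t₂, ht₂, hc₂⟩⟩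
        have : ((t₁ : ℕ) : ZMod n) = ((t₂ + k : ℕ) : ZMod n) := by
          push_cast
          rw [← hc₂] at hc₁
          linear_combination hc₁
        have ht : t₁ = t₂ + k := natCast_zmod_inj (by omega) (by omega) this
        exact ⟨t₂, by omega, hc₂⟩
      · rintro ⟨t, ht, rfl⟩
        refine ⟨⟨t + k, by omega, by push_cast; ring⟩, ⟨t, by omega, rfl⟩⟩
    rw [hSeq, Finset.card_image_of_injOn, Finset.card_range]
    intro t₁ h₁ t₂ h₂ h
    simp only [Finset.coe_range, Set.mem_Iio] at h₁ h₂
    exact natCast_zmod_inj (by omega) (by omega) h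
  have hmatch : (Finset.univ.filter
      (fun i : Fin n => (i, false) ∈ H₀ ∧ (i, true) ∈ H₀)).card = p := by
    rw [← hScard]
    apply Finset.card_bij (fun i _ => ψ i)
    · intro i hi
      simp only [Finset.mem_filter, Finset.mem_univ, true_and] at hi ⊢
      exact (hmemS _).mpr ((hcond i).mp hi)
    · intro i _ j _ h
      exact hψinj h
    · intro c hc
      obtain ⟨i, rfl⟩ := hψsurj c
      refine ⟨i, ?_, rfl⟩
      simp only [Finset.mem_filter, Finset.mem_univ, true_and] at hc ⊢
      exact (hcond i).mpr ((hmemS _).mp hc)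
  have hcard : H₀.card = 2 * p + 2 * k := by
    rw [hH₀, Finset.card_image_of_injective _ φ.symm.injective, hB,
      card_quasiB n p k hn hpk]
  refine ⟨H₀, ⟨?_, himg⟩, ?_⟩
  · simp only [matchFamily, Finset.mem_filter, Finset.mem_univ, true_and]
    exact ⟨hcard, hmatch⟩
  · rintro H ⟨-, hHimg⟩
    have : (H.image φ).image φ.symm = B.image φ.symm := by rw [hHimg]
    rwa [Finset.image_image, show (φ.symm ∘ φ) = id from funext (by simp), Finset.image_id]
      at this
end

section
/- Let n, p, k be natural numbers with n ≥ 2p + 2k and p + k ≥ 1. For any two members H, H' of H^{(p,2k)}(n) and any two indices i, j ∈ ZMod n, the number of proper mappings φ with φ(H) = B_i equals the number of proper mappings φ with φ(H') = B_j. -/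
namespace PMAux

variable {n p k : ℕ}

def shiftE (n : ℕ) (c : ZMod n) : (ZMod n × Bool) ≃ (ZMod n × Bool) :=
  (Equiv.addLeft c).prodCongr (Equiv.refl Bool)

@[simp] lemma shiftE_apply (c : ZMod n) (x : ZMod n × Bool) :
    shiftE n c x = (c + x.1, x.2) := rfl

lemma quasiB_image_shift (c i : ZMod n) :
    (quasiB n p k i).image (shiftE n c) = quasiB n p k (c + i) := by
  unfold quasiB
  rw [Finset.image_union, Finset.image_image, Finset.image_image]
  congr 1
  · congr 1
    funext t
    simp only [Function.comp_apply, shiftE_apply, Prod.mk.injEq, and_true]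
    ring
  · congr 1
    funext t
    simp only [Function.comp_apply, shiftE_apply, Prod.mk.injEq, and_true]
    ring

lemma image_of_iff {α β : Type*} [DecidableEq α] [DecidableEq β] (e : α ≃ β)
    {s : Finset α} {t : Finset β} (h : ∀ x, x ∈ s ↔ e x ∈ t) :
    s.image e = t ∧ t.image e.symm = s := by
  constructor
  · ext y
    simp only [Finset.mem_image]
    constructor
    · rintro ⟨x, hx, rfl⟩; exact (h x).1 hx
    · intro hy; exact ⟨e.symm y, (h _).2 (by simpa using hy), by simp⟩
  · ext x
    simp only [Finset.mem_image]
    constructor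
    · rintro ⟨y, hy, rfl⟩; exact (h _).2 (by simpa using hy)
    · intro hx; exact ⟨e x, (h x).1 hx, by simp⟩

def boolNot : Bool ≃ Bool := ⟨not, not, Bool.not_not, Bool.not_not⟩

def cls (K : Finset (Fin n × Bool)) (i : Fin n) : Fin 3 :=
  if (i, false) ∈ K ∧ (i, true) ∈ K then 0 else
    if (i, false) ∈ K ∨ (i, true) ∈ K then 1 else 2

lemma cls_eq_zero {K : Finset (Fin n × Bool)} {i : Fin n} :
    cls K i = 0 ↔ ((i, false) ∈ K ∧ (i, true) ∈ K) := by
  unfold cls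
  split_ifs with h1 h2 <;> simp_all

lemma cls_ne_two {K : Finset (Fin n × Bool)} {i : Fin n} :
    cls K i ≠ 2 ↔ ((i, false) ∈ K ∨ (i, true) ∈ K) := by
  unfold cls
  split_ifs with h1 h2 <;> simp_all

lemma cls_eq_one {K : Finset (Fin n × Bool)} {i : Fin n} :
    cls K i = 1 ↔ (((i, false) ∈ K ∨ (i, true) ∈ K) ∧ ¬((i, false) ∈ K ∧ (i, true) ∈ K)) := by
  unfold cls
  split_ifs with h1 h2 <;> simp_all

lemma card_split (K : Finset (Fin n × Bool)) :
    K.card = (Finset.univ.filter fun i : Fin n => (i, false) ∈ K).card +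
      (Finset.univ.filter fun i : Fin n => (i, true) ∈ K).card := by
  have hK : K = ((Finset.univ.filter fun i : Fin n => (i, false) ∈ K).image fun i => (i, false)) ∪
      ((Finset.univ.filter fun i : Fin n => (i, true) ∈ K).image fun i => (i, true)) := by
    ext ⟨a, b⟩
    cases b <;> simp
  have hdisj : Disjoint
      ((Finset.univ.filter fun i : Fin n => (i, false) ∈ K).image fun i => (i, false))
      ((Finset.univ.filter fun i : Fin n => (i, true) ∈ K).image fun i => (i, true)) := by
    rw [Finset.disjoint_left]
    rintro ⟨a, b⟩ h1 h2
    simp only [Finset.mem_image] at h1 h2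
    obtain ⟨x, -, hx⟩ := h1
    obtain ⟨y, -, hy⟩ := h2
    rw [← hx] at hy
    simpa using hy
  have hinj1 : Function.Injective (fun i : Fin n => ((i, false) : Fin n × Bool)) := by
    intro a b hab; simpa using hab
  have hinj2 : Function.Injective (fun i : Fin n => ((i, true) : Fin n × Bool)) := by
    intro a b hab; simpa using hab
  conv_lhs => rw [hK]
  rw [Finset.card_union_of_disjoint hdisj, Finset.card_image_of_injective _ hinj1,
    Finset.card_image_of_injective _ hinj2]

lemma fiber_card (K : Finset (Fin n × Bool)) (hK : K.card = 2 * p + 2 * k)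
    (hf : (Finset.univ.filter fun i : Fin n => (i, false) ∈ K ∧ (i, true) ∈ K).card = p)
    (v : Fin 3) :
    (Finset.univ.filter fun i : Fin n => cls K i = v).card =
      if v = 0 then p else if v = 1 then 2 * k else n - (p + 2 * k) := by
  set A := Finset.univ.filter fun i : Fin n => (i, false) ∈ K with hA
  set B := Finset.univ.filter fun i : Fin n => (i, true) ∈ K with hB
  have hAB : A.card + B.card = 2 * p + 2 * k := by rw [← card_split K]; exact hK
  have hI : (A ∩ B).card = p := by
    rw [← Finset.filter_and]; exact hf
  have hU : (A ∪ B).card = p + 2 * k := by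
    have := Finset.card_union_add_card_inter A B
    omega
  have h0 : (Finset.univ.filter fun i : Fin n => cls K i = 0).card = p := by
    rw [show (Finset.univ.filter fun i : Fin n => cls K i = 0) =
        (Finset.univ.filter fun i : Fin n => (i, false) ∈ K ∧ (i, true) ∈ K) from
      Finset.filter_congr fun x _ => cls_eq_zero]
    exact hf
  have h1 : (Finset.univ.filter fun i : Fin n => cls K i = 1).card = 2 * k := by
    have heq : (Finset.univ.filter fun i : Fin n => cls K i = 1) = (A ∪ B) \ (A ∩ B) := by
      ext x
      simp only [Finset.mem_filter, Finset.mem_univ, true_and, Finset.mem_sdiff,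
        Finset.mem_union, Finset.mem_inter, cls_eq_one, hA, hB]
      try simp only [Finset.mem_filter, Finset.mem_univ, true_and]
      try tauto
    rw [heq, Finset.card_sdiff_of_subset (Finset.inter_subset_union), hU, hI]
    omega
  have hsum : n = ∑ v : Fin 3, (Finset.univ.filter fun i : Fin n => cls K i = v).card := by
    have := Finset.card_eq_sum_card_fiberwise
      (f := cls K) (s := Finset.univ) (t := Finset.univ) (fun x _ => Finset.mem_univ _)
    simpa using this
  rw [Fin.sum_univ_three] at hsum
  fin_cases v <;> simp_all <;> omega

lemma exists_psi (H H' : Finset (Fin n × Bool))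
    (hc : H.card = 2 * p + 2 * k)
    (hf : (Finset.univ.filter fun i : Fin n => (i, false) ∈ H ∧ (i, true) ∈ H).card = p)
    (hc' : H'.card = 2 * p + 2 * k)
    (hf' : (Finset.univ.filter fun i : Fin n => (i, false) ∈ H' ∧ (i, true) ∈ H').card = p) :
    ∃ ψ : (Fin n × Bool) ≃ (Fin n × Bool),
      (∀ i : Fin n, (ψ (i, false)).1 = (ψ (i, true)).1) ∧ ∀ x, x ∈ H' ↔ ψ x ∈ H := by
  have hcards : ∀ v : Fin 3, (Finset.univ.filter fun i : Fin n => cls H' i = v).card =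
      (Finset.univ.filter fun i : Fin n => cls H i = v).card := by
    intro v
    rw [fiber_card H' hc' hf' v, fiber_card H hc hf v]
  let e : ∀ v : Fin 3, {x : Fin n // cls H' x = v} ≃ {x : Fin n // cls H x = v} := fun v =>
    (Equiv.subtypeEquivRight (fun x => by simp)).trans
      ((Finset.equivOfCardEq (hcards v)).trans (Equiv.subtypeEquivRight (fun x => by simp)))
  let σ : Fin n ≃ Fin n := Equiv.ofFiberEquiv e
  have hσ : ∀ x, cls H (σ x) = cls H' x := fun x => Equiv.ofFiberEquiv_map e x
  have hfull : ∀ i, ((i, false) ∈ H' ∧ (i, true) ∈ H') ↔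
      ((σ i, false) ∈ H ∧ (σ i, true) ∈ H) := by
    intro i; rw [← cls_eq_zero, ← cls_eq_zero, hσ]
  have hor : ∀ i, ((i, false) ∈ H' ∨ (i, true) ∈ H') ↔
      ((σ i, false) ∈ H ∨ (σ i, true) ∈ H) := by
    intro i; rw [← cls_ne_two, ← cls_ne_two, hσ]
  refine ⟨Equiv.prodShear σ (fun i =>
    if ((i, (false : Bool)) ∈ H') ↔ ((σ i, (false : Bool)) ∈ H) then Equiv.refl Bool
    else boolNot), ?_, ?_⟩
  · intro i; rfl
  · rintro ⟨i, b⟩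
    have h1 := hfull i
    have h2 := hor i
    simp only [Equiv.prodShear, Equiv.coe_fn_mk]
    split_ifs with h
    · cases b <;> simp only [Equiv.refl_apply] <;> tauto
    · cases b <;> simp only [boolNot, Equiv.coe_fn_mk, Bool.not_false, Bool.not_true] <;> tauto

lemma symm_edge (ψ : (Fin n × Bool) ≃ (Fin n × Bool))
    (hψ : ∀ i : Fin n, (ψ (i, false)).1 = (ψ (i, true)).1) :
    ∀ j : Fin n, (ψ.symm (j, false)).1 = (ψ.symm (j, true)).1 := by
  intro j
  rcases hx : ψ.symm (j, false) with ⟨a, b⟩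
  have h1 : ψ (a, b) = (j, false) := by rw [← hx]; simp
  have h2 : (ψ (a, !b)).1 = j := by
    cases b
    · rw [show (!false) = true from rfl, ← hψ a, h1]
    · rw [show (!true) = false from rfl, hψ a, h1]
  have h3 : ψ (a, !b) ≠ (j, false) := by
    rw [← h1]
    intro hcontra
    have := ψ.injective hcontra
    simp at this
  have h4 : ψ (a, !b) = (j, true) := by
    rcases hz : ψ (a, !b) with ⟨z1, z2⟩
    rw [hz] at h2 h3
    have hz1 : z1 = j := h2
    subst hz1
    cases z2
    · exact absurd rfl h3
    · rfl
  have h5 : ψ.symm (j, true) = (a, !b) := by rw [← h4]; simp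
  rw [h5]

lemma proper_comp (ψ : (Fin n × Bool) ≃ (Fin n × Bool))
    (hψ : ∀ i : Fin n, (ψ (i, false)).1 = (ψ (i, true)).1)
    (φ : (Fin n × Bool) ≃ (ZMod n × Bool)) (hφ : IsProperMapping n φ) (c : ZMod n) :
    IsProperMapping n (ψ.trans (φ.trans (shiftE n c))) := by
  intro i
  simp only [Equiv.trans_apply, shiftE_apply]
  congr 1
  rcases hx : ψ (i, false) with ⟨m, b0⟩
  rcases hy : ψ (i, true) with ⟨m2, b1⟩
  have hm : m = m2 := by have := hψ i; rw [hx, hy] at this; exact this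
  subst hm
  have hne : b0 ≠ b1 := by
    intro hb
    subst hb
    have : ψ (i, false) = ψ (i, true) := by rw [hx, hy]
    have := ψ.injective this
    simp at this
  cases b0 <;> cases b1
  · exact absurd rfl hne
  · exact hφ m
  · exact (hφ m).symm
  · exact absurd rfl hne

end PMAux

open PMAux

/-- For `n ≥ 2p+2k` and `p+k ≥ 1`, the number of proper mappings taking a given
`H ∈ H^{(p,2k)}(n)` to a given quasi-interval `B_i` does not depend on the choice of `H`
and `B_i`. -/
theorem properMapping_count_indep (n p k : ℕ) (hn : 2 * p + 2 * k ≤ n) (hpk : 1 ≤ p + k)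
    (H H' : Finset (Fin n × Bool)) (hH : H ∈ matchFamily n p (2 * k))
    (hH' : H' ∈ matchFamily n p (2 * k)) (i j : ZMod n) :
    Set.ncard {φ : (Fin n × Bool) ≃ (ZMod n × Bool) |
        IsProperMapping n φ ∧ H.image φ = quasiB n p k i} =
    Set.ncard {φ : (Fin n × Bool) ≃ (ZMod n × Bool) |
        IsProperMapping n φ ∧ H'.image φ = quasiB n p k j} := by
  simp only [matchFamily, Finset.mem_filter, Finset.mem_univ, true_and] at hH hH'
  obtain ⟨hc, hf⟩ := hH
  obtain ⟨hc', hf'⟩ := hH'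
  obtain ⟨ψ, hψe, hψm⟩ := exists_psi (p := p) (k := k) H H' hc hf hc' hf'
  have hHim : H'.image ψ = H := (image_of_iff ψ hψm).1
  have hHim' : H.image ψ.symm = H' := (image_of_iff ψ hψm).2
  set ρ := shiftE n (j - i) with hρ
  set g : ((Fin n × Bool) ≃ (ZMod n × Bool)) → ((Fin n × Bool) ≃ (ZMod n × Bool)) :=
    fun φ => ψ.trans (φ.trans ρ) with hg
  have hginj : Function.Injective g := by
    intro φ₁ φ₂ h
    apply Equiv.ext
    intro x
    have h1 := Equiv.ext_iff.mp h (ψ.symm x)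
    simp only [hg, Equiv.trans_apply, Equiv.apply_symm_apply] at h1
    exact ρ.injective h1
  have himg : g '' {φ : (Fin n × Bool) ≃ (ZMod n × Bool) |
        IsProperMapping n φ ∧ H.image φ = quasiB n p k i} =
      {φ : (Fin n × Bool) ≃ (ZMod n × Bool) |
        IsProperMapping n φ ∧ H'.image φ = quasiB n p k j} := by
    ext φ'
    simp only [Set.mem_image, Set.mem_setOf_eq]
    constructor
    · rintro ⟨φ, ⟨hp1, hp2⟩, rfl⟩
      refine ⟨proper_comp ψ hψe φ hp1 _, ?_⟩
      have him : H'.image ⇑(g φ) = ((H'.image ψ).image φ).image ρ := by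
        simp only [hg, Equiv.coe_trans, Finset.image_image]
        rfl
      rw [him, hHim, hp2, quasiB_image_shift]
      congr 1
      ring
    · rintro ⟨hp1, hp2⟩
      refine ⟨ψ.symm.trans (φ'.trans (shiftE n (i - j))),
        ⟨proper_comp ψ.symm (symm_edge ψ hψe) φ' hp1 _, ?_⟩, ?_⟩
      · have him : H.image ⇑(ψ.symm.trans (φ'.trans (shiftE n (i - j)))) =
            ((H.image ψ.symm).image φ').image (shiftE n (i - j)) := by
          simp only [Equiv.coe_trans, Finset.image_image]
          rfl
        rw [him, hHim', hp2, quasiB_image_shift]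
        congr 1
        ring
      · apply Equiv.ext
        intro x
        simp only [hg, Equiv.trans_apply, Equiv.symm_apply_apply, shiftE_apply, hρ]
        have hcoord : j - i + (i - j + (φ' x).1) = (φ' x).1 := by ring
        rw [hcoord]
  rw [← himg, Set.ncard_image_of_injective _ hginj]
end

section
/- Let n, p be natural numbers with 1 ≤ p and 2p ≤ n. Every intersecting family F ⊆ H^{(p,0)}(n) (i.e., an intersecting family of vertex sets each consisting of exactly p full edges of M_n) satisfies |F| ≤ C(n − 1, p − 1), where C denotes the binomial coefficient. -/
/-- The edge-index set of a vertex set. -/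
def edgeIdx {n : ℕ} (H : Finset (Fin n × Bool)) : Finset (Fin n) :=
  Finset.univ.filter (fun i : Fin n => (i, false) ∈ H ∧ (i, true) ∈ H)

lemma matchFamily_eq_prod {n p : ℕ} {H : Finset (Fin n × Bool)}
    (hH : H ∈ matchFamily n p 0) : H = edgeIdx H ×ˢ Finset.univ := by
  simp only [matchFamily, Finset.mem_filter, Finset.mem_univ, true_and] at hH
  obtain ⟨hcard, hidx⟩ := hH
  symm
  apply Finset.eq_of_subset_of_card_le
  · intro ⟨i, b⟩ hib
    simp only [edgeIdx, Finset.mem_product, Finset.mem_filter, Finset.mem_univ, true_and] at hib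
    cases b
    · exact hib.1.1
    · exact hib.1.2
  · rw [Finset.card_product, Finset.card_univ]
    simp [edgeIdx, hidx, hcard, two_mul, mul_comm]

/-- For `1 ≤ p` and `2p ≤ n`, every intersecting family `F ⊆ H^{(p,0)}(n)`
satisfies `|F| ≤ C(n-1, p-1)`. -/
theorem matchFamily_p0_intersecting_bound (n p : ℕ) (hp : 1 ≤ p) (hn : 2 * p ≤ n)
    (F : Finset (Finset (Fin n × Bool))) (hF : F ⊆ matchFamily n p 0)
    (hint : IsIntersecting F) :
    F.card ≤ (n - 1).choose (p - 1) := by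
  set G : Finset (Finset (Fin n)) := F.image edgeIdx with hG
  have hmem : ∀ H ∈ F, H = edgeIdx H ×ˢ Finset.univ := fun H hH =>
    matchFamily_eq_prod (hF hH)
  have hcardG : G.card = F.card := by
    apply Finset.card_image_of_injOn
    intro A hA B hB hAB
    rw [hmem A hA, hmem B hB, hAB]
  have hsized : (G : Set (Finset (Fin n))).Sized p := by
    intro A hA
    simp only [hG, Finset.coe_image, Set.mem_image, Finset.mem_coe] at hA
    obtain ⟨H, hH, rfl⟩ := hA
    have := hF hH
    simp only [matchFamily, Finset.mem_filter] at this
    exact this.2.2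
  have hintG : (G : Set (Finset (Fin n))).Intersecting := by
    intro A hA B hB hdisj
    simp only [hG, Finset.coe_image, Set.mem_image, Finset.mem_coe] at hA hB
    obtain ⟨HA, hHA, rfl⟩ := hA
    obtain ⟨HB, hHB, rfl⟩ := hB
    obtain ⟨⟨i, b⟩, hib⟩ := hint HA hHA HB hHB
    rw [Finset.mem_inter] at hib
    have h1 : i ∈ edgeIdx HA := by
      have h := hib.1
      rw [hmem HA hHA, Finset.mem_product] at h
      exact h.1
    have h2 : i ∈ edgeIdx HB := by
      have h := hib.2
      rw [hmem HB hHB, Finset.mem_product] at h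
      exact h.1
    exact (Finset.disjoint_left.1 hdisj h1) h2
  have hp2 : p ≤ n / 2 := Nat.le_div_iff_mul_le (by norm_num) |>.2 (by omega)
  calc F.card = G.card := hcardG.symm
    _ ≤ (n - 1).choose (p - 1) := Finset.erdos_ko_rado hintG hsized hp2
end

section
/- Let n, p, k be natural numbers with n ≥ 2p + 2k, p + k ≥ 1, and let c be an integer with 1 ≤ c ≤ p + k − 1. Then for every i ∈ ZMod n, the even-case quasi-intervals B_{i − (p + k) + c} and B_{i + c} are disjoint. -/
lemma quasiB_cast_ne (n m : ℕ) (h : 2 * m ≤ n) (t s : ℕ) (ht : t < m) (hs : s < m) :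
    (t : ZMod n) ≠ (s : ZMod n) + (m : ZMod n) := by
  intro h'
  rw [← Nat.cast_add] at h'
  have := (ZMod.natCast_eq_natCast_iff _ _ _).mp h'
  have h1 : t % n = (s + m) % n := this
  rw [Nat.mod_eq_of_lt (by omega), Nat.mod_eq_of_lt (by omega)] at h1
  omega

/-- For `n ≥ 2p+2k`, `p+k ≥ 1` and an integer `c` with `1 ≤ c ≤ p+k-1`, the
even-case quasi-intervals `B_{i-(p+k)+c}` and `B_{i+c}` are disjoint. -/
theorem quasiB_shift_disjoint (n p k : ℕ) (hn : 2 * p + 2 * k ≤ n) (hpk : 1 ≤ p + k)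
    (c : ℤ) (hc1 : 1 ≤ c) (hc2 : c ≤ (p : ℤ) + k - 1) (i : ZMod n) :
    Disjoint (quasiB n p k (i - ((p : ZMod n) + (k : ZMod n)) + (c : ZMod n)))
      (quasiB n p k (i + (c : ZMod n))) := by
  rw [Finset.disjoint_left]
  intro x hx hy
  simp only [quasiB, Finset.mem_union, Finset.mem_image, Finset.mem_range] at hx hy
  have hm : ((p : ZMod n) + (k : ZMod n)) = ((p + k : ℕ) : ZMod n) := by push_cast; ring
  have hmn : 2 * (p + k) ≤ n := by omega
  rcases hx with ⟨t, ht, hxt⟩ | ⟨t, ht, hxt⟩ <;> rcases hy with ⟨s, hs, hys⟩ | ⟨s, hs, hys⟩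
  · have h1 := congrArg Prod.fst (hxt.trans hys.symm)
    simp only at h1
    rw [hm] at h1
    exact quasiB_cast_ne n (p + k) hmn t s ht hs (by linear_combination h1)
  · exact absurd (congrArg Prod.snd (hxt.trans hys.symm)) (by simp)
  · exact absurd (congrArg Prod.snd (hxt.trans hys.symm)) (by simp)
  · have h1 := congrArg Prod.fst (hxt.trans hys.symm)
    simp only at h1
    rw [hm] at h1
    exact quasiB_cast_ne n (p + k) hmn t s ht hs (by linear_combination h1)
end

section
/- Let n, p, k be natural numbers with n ≥ 2p + 2k + 1, and let c be an integer with 1 ≤ c ≤ 2p + 2k. Then for every j ∈ ZMod (2n), the odd-case quasi-intervals C_{j − (2p + 2k + 1) + c} and C_{j + c} are disjoint. -/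
lemma cast_inj' {n u v : ℕ} (hu : u < n) (hv : v < n) (h : (u : ZMod n) = v) : u = v := by
  haveI : NeZero n := ⟨by omega⟩
  have := congrArg ZMod.val h
  rwa [ZMod.val_natCast_of_lt hu, ZMod.val_natCast_of_lt hv] at this

lemma mod_div2 (n x : ℕ) : (((x % (2*n)) / 2 : ℕ) : ZMod n) = ((x / 2 : ℕ) : ZMod n) := by
  have h := Nat.div_add_mod x (2*n)
  set q := x / (2*n) with hq
  set r := x % (2*n) with hr
  set w := n * q with hw
  have h2 : x = 2*w + r := by rw [hw, ← h]; ring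
  have h3 : x / 2 = w + r / 2 := by omega
  rw [h3]
  push_cast [hw]
  simp

lemma mod_par2 (n x : ℕ) : (x % (2*n)) % 2 = x % 2 := by
  have h := Nat.div_add_mod x (2*n)
  set q := x / (2*n) with hq
  set r := x % (2*n) with hr
  set w := n * q with hw
  have h2 : x = 2*w + r := by rw [hw, ← h]; ring
  omega

lemma key (n p k : ℕ) (hn : 2 * p + 2 * k + 1 ≤ n) (j : ZMod (2 * n)) :
    Disjoint (quasiC n p k j)
      (quasiC n p k (j + ((2 * p + 2 * k + 1 : ℕ) : ZMod (2 * n)))) := by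
  haveI : NeZero (2*n) := ⟨by omega⟩
  set a := j.val with ha
  have han : a < 2*n := j.val_lt
  have hNval : ((2*p+2*k+1 : ℕ) : ZMod (2*n)).val = 2*p+2*k+1 :=
    ZMod.val_natCast_of_lt (by omega)
  have hval : (j + ((2 * p + 2 * k + 1 : ℕ) : ZMod (2*n))).val
      = (a + (2*p+2*k+1)) % (2*n) := by
    rw [ZMod.val_add, hNval]
  rcases Nat.even_or_odd a with hpar | hpar
  · -- a even
    have ha2 : a % 2 = 0 := Nat.even_iff.mp hpar
    have hpar2 : (a + (2*p+2*k+1)) % (2*n) % 2 = 1 := by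
      rw [mod_par2]; omega
    have hi2 : (((a + (2*p+2*k+1)) % (2*n) / 2 : ℕ) : ZMod n)
        = ((a/2 : ℕ) : ZMod n) + ((p + k : ℕ) : ZMod n) := by
      rw [mod_div2]
      have : (a + (2*p+2*k+1))/2 = a/2 + (p+k) := by omega
      rw [this]; push_cast; ring
    simp only [quasiC, hval, ← ha, ha2, hpar2, reduceIte, hi2]
    rw [if_neg one_ne_zero, Finset.disjoint_union_left]
    constructor <;> rw [Finset.disjoint_union_right] <;> constructor <;>
      · simp only [Finset.disjoint_left, Finset.mem_image, Finset.mem_range]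
        rintro ⟨x, b⟩ ⟨t1, ht1, he1⟩ ⟨t2, ht2, he2⟩
        have h := he1.trans he2.symm
        first
        | simpa using congrArg Prod.snd h
        | · have h1 := congrArg Prod.fst h
            simp only at h1
            push_cast at h1
            first
            | have h2 : ((t1 : ℕ) : ZMod n) = ((p+k+1+t2 : ℕ) : ZMod n) := by
                push_cast; linear_combination h1
            | have h2 : ((t1 : ℕ) : ZMod n) = ((p+k+t2 : ℕ) : ZMod n) := by
                push_cast; linear_combination h1
            have := cast_inj' (by omega) (by omega) h2
            omega
  · -- a odd
    have ha2 : a % 2 = 1 := Nat.odd_iff.mp hpar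
    have h0 : ¬ (a % 2 = 0) := by omega
    have hpar2 : (a + (2*p+2*k+1)) % (2*n) % 2 = 0 := by
      rw [mod_par2]; omega
    have hi2 : (((a + (2*p+2*k+1)) % (2*n) / 2 : ℕ) : ZMod n)
        = ((a/2 : ℕ) : ZMod n) + ((p + k + 1 : ℕ) : ZMod n) := by
      rw [mod_div2]
      have : (a + (2*p+2*k+1))/2 = a/2 + (p+k+1) := by omega
      rw [this]; push_cast; ring
    simp only [quasiC, hval, ← ha, h0, hpar2, reduceIte, hi2, if_false]
    rw [Finset.disjoint_union_left]
    constructor <;> rw [Finset.disjoint_union_right] <;> constructor <;>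
      · simp only [Finset.disjoint_left, Finset.mem_image, Finset.mem_range]
        rintro ⟨x, b⟩ ⟨t1, ht1, he1⟩ ⟨t2, ht2, he2⟩
        have h := he1.trans he2.symm
        first
        | simpa using congrArg Prod.snd h
        | · have h1 := congrArg Prod.fst h
            simp only at h1
            push_cast at h1
            first
            | have h2 : ((t1 : ℕ) : ZMod n) = ((p+k+1+t2 : ℕ) : ZMod n) := by
                push_cast; linear_combination h1
            | have h2 : ((t1 : ℕ) : ZMod n) = ((p+k+t2 : ℕ) : ZMod n) := by
                push_cast; linear_combination h1
            have := cast_inj' (by omega) (by omega) h2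
            omega

/-- For `n ≥ 2p+2k+1` and an integer `c` with `1 ≤ c ≤ 2p+2k`, the odd-case
quasi-intervals `C_{j-(2p+2k+1)+c}` and `C_{j+c}` are disjoint. -/
theorem quasiC_shift_disjoint (n p k : ℕ) (hn : 2 * p + 2 * k + 1 ≤ n)
    (c : ℤ) (hc1 : 1 ≤ c) (hc2 : c ≤ 2 * (p : ℤ) + 2 * k) (j : ZMod (2 * n)) :
    Disjoint (quasiC n p k (j - ((2 * p + 2 * k + 1 : ℕ) : ZMod (2 * n)) + (c : ZMod (2 * n))))
      (quasiC n p k (j + (c : ZMod (2 * n)))) := by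
  have h : j + (c : ZMod (2 * n)) =
      (j - ((2 * p + 2 * k + 1 : ℕ) : ZMod (2 * n)) + (c : ZMod (2 * n)))
      + ((2 * p + 2 * k + 1 : ℕ) : ZMod (2 * n)) := by ring
  rw [h]
  exact key n p k hn _
end
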